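/- arXiv:2507.09526 — 6 statements merged into one kernel-verified Lean document; each statement's English description precedes it below -/
import Mathlib

section
/- Let (V, V₊, v) be an order unit space with open cone C := V₊° and let λ > 0. Then for all x, y ∈ C with x ≥ λ⁻¹v and y ≥ λ⁻¹v one has d_T(x, y) ≤ λ‖x − y‖_v. -/
open scoped Topology

section Defs

/-- `(V, P, v)` is an order unit space: `P` is a proper cone, the induced order is
archimedean, `v` is an order unit, and the norm of `V` is the order unit norm. -/
structure IsOrderUnitSpace (V : Type*) [NormedAddCommGroup V] [NormedSpace ℝ V]
    (P : Set V) (v : V) : Prop where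
  add_mem : ∀ x ∈ P, ∀ y ∈ P, x + y ∈ P
  smul_mem : ∀ r : ℝ, 0 ≤ r → ∀ x ∈ P, r • x ∈ P
  proper : ∀ x : V, x ∈ P → -x ∈ P → x = 0
  archimedean : ∀ x b : V, (∀ r : ℝ, 0 ≤ r → b - r • x ∈ P) → -x ∈ P
  unit_mem : v ∈ P
  unit_order : ∀ x : V, ∃ r : ℝ, 0 < r ∧ r • v - x ∈ P
  norm_eq : ∀ x : V, ‖x‖ = sInf {r : ℝ | 0 ≤ r ∧ x + r • v ∈ P ∧ r • v - x ∈ P}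

variable {V : Type*} [NormedAddCommGroup V] [NormedSpace ℝ V]
variable {W : Type*} [NormedAddCommGroup W] [NormedSpace ℝ W]

/-- The open cone (norm interior of the cone `P`) of an order unit space. -/
def openCone (P : Set V) (v : V) : Set V := {x | ∃ ε : ℝ, 0 < ε ∧ x - ε • v ∈ P}

/-- The order unit norm `‖x‖_u` determined by an order unit `u`. -/
noncomputable def ounorm (P : Set V) (u x : V) : ℝ :=
  sInf {r : ℝ | 0 ≤ r ∧ x + r • u ∈ P ∧ r • u - x ∈ P}

/-- Thompson's metric `d_T(x,y) = log inf {r ≥ 1 : r⁻¹ y ≤ x ≤ r y}`. -/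
noncomputable def thompsonDist (P : Set V) (x y : V) : ℝ :=
  Real.log (sInf {r : ℝ | 1 ≤ r ∧ x - r⁻¹ • y ∈ P ∧ r • y - x ∈ P})

/-- `Φ` is a gauge-reversing bijection from the open cone of `(V, P, v)` onto the
open cone of `(W, Q, w)`: a bijection, homogeneous of degree `-1`,
and an order-anti-isomorphism. -/
def GaugeReversing (P : Set V) (v : V) (Q : Set W) (w : W) (Φ : V → W) : Prop :=
  Set.BijOn Φ (openCone P v) (openCone Q w) ∧
  (∀ x ∈ openCone P v, ∀ r : ℝ, 0 < r → Φ (r • x) = r⁻¹ • Φ x) ∧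
  (∀ x ∈ openCone P v, ∀ y ∈ openCone P v, (y - x ∈ P ↔ Φ x - Φ y ∈ Q))

/-- `Φ` is a gauge-preserving bijection from the open cone of `(V, P, v)` onto the
open cone of `(W, Q, w)`: a bijection, homogeneous of degree `1`,
and an order-isomorphism. -/
def GaugePreserving (P : Set V) (v : V) (Q : Set W) (w : W) (Φ : V → W) : Prop :=
  Set.BijOn Φ (openCone P v) (openCone Q w) ∧
  (∀ x ∈ openCone P v, ∀ r : ℝ, 0 < r → Φ (r • x) = r • Φ x) ∧
  (∀ x ∈ openCone P v, ∀ y ∈ openCone P v, (y - x ∈ P ↔ Φ y - Φ x ∈ Q))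

/-- `mul` is a JB-algebra structure on the order unit space `(V, P, v)` with unit
element `v` and cone of squares `P`. -/
def IsJBAlgebraStructure (P : Set V) (v : V) (mul : V →ₗ[ℝ] V →ₗ[ℝ] V) : Prop :=
  (∀ x y : V, mul x y = mul y x) ∧
  (∀ x : V, mul v x = x) ∧
  (∀ x y : V, mul x (mul y (mul x x)) = mul (mul x y) (mul x x)) ∧
  (∀ x y : V, ‖mul x y‖ ≤ ‖x‖ * ‖y‖) ∧
  (∀ x : V, ‖mul x x‖ = ‖x‖ ^ 2) ∧
  (∀ x y : V, ‖mul x x‖ ≤ ‖mul x x + mul y y‖) ∧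
  P = {y : V | ∃ x : V, mul x x = y}

/-- `S` is a `d_T`-symmetry of the open cone of `(V, P, v)` at the point `p`:
an involutive `d_T`-isometry of the open cone having `p` as an isolated fixed point. -/
def IsDTSymmetry (P : Set V) (v : V) (S : V → V) (p : V) : Prop :=
  (∀ x ∈ openCone P v, S x ∈ openCone P v) ∧
  (∀ x ∈ openCone P v, S (S x) = x) ∧
  (∀ x ∈ openCone P v, ∀ y ∈ openCone P v,
    thompsonDist P (S x) (S y) = thompsonDist P x y) ∧
  p ∈ openCone P v ∧ S p = p ∧
  (∃ ε : ℝ, 0 < ε ∧ ∀ x ∈ openCone P v, S x = x → thompsonDist P p x < ε → x = p)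

/-- A complete order unit space `(W, Q, w)` together with a gauge-reversing bijection
from the open cone of `(V, P, v)` onto the open cone of `(W, Q, w)`. -/
structure GaugeReversingTarget (V : Type*) [NormedAddCommGroup V] [NormedSpace ℝ V]
    (P : Set V) (v : V) where
  W : Type
  [instGroup : NormedAddCommGroup W]
  [instSpace : NormedSpace ℝ W]
  [instComplete : CompleteSpace W]
  Q : Set W
  w : W
  ous : IsOrderUnitSpace W Q w
  Φ : V → W
  grev : GaugeReversing P v Q w Φ

/-- The state space of the order unit space `(V, P, v)`, as a subset of the
weak-* dual of `V`. -/
def stateSpace (P : Set V) (v : V) : Set (WeakDual ℝ V) :=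
  {ρ | (∀ x ∈ P, 0 ≤ ρ x) ∧ ρ v = 1}

/-- A real-valued function on the dual is affine on `K`. -/
def AffineOnK (K : Set (WeakDual ℝ V)) (g : WeakDual ℝ V → ℝ) : Prop :=
  ∀ ρ ∈ K, ∀ σ ∈ K, ∀ t : ℝ, 0 ≤ t → t ≤ 1 →
    g ((1 - t) • ρ + t • σ) = (1 - t) * g ρ + t * g σ

/-- An extended-real-valued function on the dual is affine on `K`. -/
def AffineOnKE (K : Set (WeakDual ℝ V)) (g : WeakDual ℝ V → EReal) : Prop :=
  ∀ ρ ∈ K, ∀ σ ∈ K, ∀ t : ℝ, 0 ≤ t → t ≤ 1 →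
    g ((1 - t) • ρ + t • σ) = ((1 - t : ℝ) : EReal) * g ρ + ((t : ℝ) : EReal) * g σ

/-- Membership in the extended cone `C_usc` of nonnegative affine upper semicontinuous
functions on the state space `K`. -/
def memCusc (K : Set (WeakDual ℝ V)) (g : WeakDual ℝ V → ℝ) : Prop :=
  (∀ ρ ∈ K, 0 ≤ g ρ) ∧ AffineOnK K g ∧ UpperSemicontinuousOn g K

/-- `p` is an extremal vector of the cone `C_usc` over the state space `K`. -/
def IsExtremalCusc (K : Set (WeakDual ℝ V)) (p : WeakDual ℝ V → ℝ) : Prop :=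
  memCusc K p ∧ (∃ ρ ∈ K, p ρ ≠ 0) ∧
  ∀ x, memCusc K x → (∀ ρ ∈ K, x ρ ≤ p ρ) →
    ∃ t : ℝ, 0 ≤ t ∧ t ≤ 1 ∧ ∀ ρ ∈ K, x ρ = t * p ρ

/-- The cone `C_usc` over the state space `K` is strongly atomic: each of its
members is the least upper bound of the extremal vectors it dominates. -/
def StronglyAtomicCusc (K : Set (WeakDual ℝ V)) : Prop :=
  ∀ g, memCusc K g →
    (∀ p, IsExtremalCusc K p → (∀ ρ ∈ K, p ρ ≤ g ρ) → ∀ ρ ∈ K, p ρ ≤ g ρ) ∧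
    (∀ h, memCusc K h →
      (∀ p, IsExtremalCusc K p → (∀ ρ ∈ K, p ρ ≤ g ρ) → ∀ ρ ∈ K, p ρ ≤ h ρ) →
      ∀ ρ ∈ K, g ρ ≤ h ρ)

end Defs

private lemma ous_norm_spec
    {V : Type*} [NormedAddCommGroup V] [NormedSpace ℝ V]
    {P : Set V} {v : V} (hV : IsOrderUnitSpace V P v) (z : V) :
    z + ‖z‖ • v ∈ P ∧ ‖z‖ • v - z ∈ P := by
  set S : Set ℝ := {r : ℝ | 0 ≤ r ∧ z + r • v ∈ P ∧ r • v - z ∈ P} with hS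
  have hnorm : ‖z‖ = sInf S := hV.norm_eq z
  -- S is nonempty
  obtain ⟨r1, hr1pos, hr1⟩ := hV.unit_order z
  obtain ⟨r2, hr2pos, hr2⟩ := hV.unit_order (-z)
  have hmax_mem : max r1 r2 ∈ S := by
    refine ⟨le_max_iff.mpr (Or.inl hr1pos.le), ?_, ?_⟩
    · have h1 : (max r1 r2 - r2) • v ∈ P :=
        hV.smul_mem _ (by simp [le_max_right r1 r2]) v hV.unit_mem
      have := hV.add_mem _ h1 _ hr2
      have heq : (max r1 r2 - r2) • v + (r2 • v - -z) = z + max r1 r2 • v := by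
        rw [sub_smul]; abel
      rwa [heq] at this
    · have h1 : (max r1 r2 - r1) • v ∈ P :=
        hV.smul_mem _ (by simp [le_max_left r1 r2]) v hV.unit_mem
      have := hV.add_mem _ h1 _ hr1
      have heq : (max r1 r2 - r1) • v + (r1 • v - z) = max r1 r2 • v - z := by
        rw [sub_smul]; abel
      rwa [heq] at this
  have hne : S.Nonempty := ⟨_, hmax_mem⟩
  have hbdd : BddBelow S := ⟨0, fun a ha => ha.1⟩
  -- S is upward closed
  have hup : ∀ a ∈ S, ∀ b : ℝ, a ≤ b → b ∈ S := by
    intro a ha b hab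
    have hb : (b - a) • v ∈ P := hV.smul_mem _ (by linarith) v hV.unit_mem
    refine ⟨le_trans ha.1 hab, ?_, ?_⟩
    · have := hV.add_mem _ hb _ ha.2.1
      have heq : (b - a) • v + (z + a • v) = z + b • v := by rw [sub_smul]; abel
      rwa [heq] at this
    · have := hV.add_mem _ hb _ ha.2.2
      have heq : (b - a) • v + (a • v - z) = b • v - z := by rw [sub_smul]; abel
      rwa [heq] at this
  -- for any ε > 0, sInf S + ε ∈ S
  have hkey : ∀ ε : ℝ, 0 < ε → sInf S + ε ∈ S := by
    intro ε hε
    obtain ⟨a, haS, ha⟩ := exists_lt_of_csInf_lt hne (by linarith : sInf S < sInf S + ε)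
    exact hup a haS _ ha.le
  -- archimedean: ‖z‖ • v - z ∈ P
  have h1 : ‖z‖ • v - z ∈ P := by
    have := hV.archimedean (z - ‖z‖ • v) v ?_
    · have heq : -(z - ‖z‖ • v) = ‖z‖ • v - z := by abel
      rwa [heq] at this
    · intro s hs
      rcases eq_or_lt_of_le hs with h | h
      · simpa [← h] using hV.unit_mem
      · have hmem := hkey s⁻¹ (by positivity)
        have h2 := hmem.2.2
        rw [hnorm]
        have h3 : s • ((sInf S + s⁻¹) • v - z) ∈ P :=
          hV.smul_mem s hs _ h2
        have hs0 : s ≠ 0 := ne_of_gt h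
        have heq : s • ((sInf S + s⁻¹) • v - z) = v - s • (z - sInf S • v) := by
          match_scalars <;> field_simp <;> ring
        rwa [heq] at h3
  have h2 : z + ‖z‖ • v ∈ P := by
    have := hV.archimedean (-z - ‖z‖ • v) v ?_
    · have heq : -(-z - ‖z‖ • v) = z + ‖z‖ • v := by abel
      rwa [heq] at this
    · intro s hs
      rcases eq_or_lt_of_le hs with h | h
      · simpa [← h] using hV.unit_mem
      · have hmem := hkey s⁻¹ (by positivity)
        have h2 := hmem.2.1
        rw [hnorm]
        have h3 : s • (z + (sInf S + s⁻¹) • v) ∈ P := hV.smul_mem s hs _ h2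
        have hs0 : s ≠ 0 := ne_of_gt h
        have heq : s • (z + (sInf S + s⁻¹) • v) = v - s • (-z - sInf S • v) := by
          match_scalars <;> field_simp <;> ring
        rwa [heq] at h3
  exact ⟨h2, h1⟩

/-- In an order unit space `(V, P, v)`, for `l > 0` and `x, y` in the
open cone with `x ≥ l⁻¹ v` and `y ≥ l⁻¹ v`, one has `d_T(x, y) ≤ l ‖x - y‖_v`. -/
theorem thompsonDist_le_mul_norm
    {V : Type*} [NormedAddCommGroup V] [NormedSpace ℝ V]
    (P : Set V) (v : V) (hV : IsOrderUnitSpace V P v)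
    (l : ℝ) (hl : 0 < l) (x y : V)
    (hx : x ∈ openCone P v) (hy : y ∈ openCone P v)
    (hxl : x - l⁻¹ • v ∈ P) (hyl : y - l⁻¹ • v ∈ P) :
    thompsonDist P x y ≤ l * ‖x - y‖ := by
  set r : ℝ := ‖x - y‖ with hr
  have hr0 : 0 ≤ r := norm_nonneg _
  obtain ⟨hPlus, hMinus⟩ := ous_norm_spec hV (x - y)
  -- hPlus : (x - y) + r • v ∈ P, hMinus : r • v - (x - y) ∈ P
  set lam : ℝ := 1 + l * r with hlam
  have hlam1 : 1 ≤ lam := by nlinarith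
  have hlampos : 0 < lam := by linarith
  set T : Set ℝ := {s : ℝ | 1 ≤ s ∧ x - s⁻¹ • y ∈ P ∧ s • y - x ∈ P} with hT
  -- lam ∈ T
  have hmem1 : lam • y - x ∈ P := by
    have h1 : (l * r) • (y - l⁻¹ • v) ∈ P := hV.smul_mem _ (by positivity) _ hyl
    have := hV.add_mem _ h1 _ hMinus
    have hl0 : l ≠ 0 := hl.ne'
    have heq : (l * r) • (y - l⁻¹ • v) + (r • v - (x - y)) = lam • y - x := by
      rw [hlam]; match_scalars <;> field_simp <;> ring
    rwa [heq] at this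
  have hmem2 : x - lam⁻¹ • y ∈ P := by
    have h1 : (l * r) • (x - l⁻¹ • v) ∈ P := hV.smul_mem _ (by positivity) _ hxl
    have h2 := hV.add_mem _ h1 _ hPlus
    have hl0 : l ≠ 0 := hl.ne'
    have heq : (l * r) • (x - l⁻¹ • v) + ((x - y) + r • v) = lam • x - y := by
      rw [hlam]; match_scalars <;> field_simp <;> ring
    rw [heq] at h2
    have h3 : lam⁻¹ • (lam • x - y) ∈ P := hV.smul_mem _ (by positivity) _ h2
    have hlam0 : lam ≠ 0 := hlampos.ne'
    have heq2 : lam⁻¹ • (lam • x - y) = x - lam⁻¹ • y := by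
      match_scalars <;> field_simp <;> ring
    rwa [heq2] at h3
  have hlamT : lam ∈ T := ⟨hlam1, hmem2, hmem1⟩
  have hne : T.Nonempty := ⟨_, hlamT⟩
  have hbdd : BddBelow T := ⟨1, fun a ha => ha.1⟩
  have hinf_le : sInf T ≤ lam := csInf_le hbdd hlamT
  have hinf_ge : (1 : ℝ) ≤ sInf T := le_csInf hne fun a ha => ha.1
  have hlog : Real.log (sInf T) ≤ Real.log lam :=
    Real.log_le_log (by linarith) hinf_le
  have hlog2 : Real.log lam ≤ l * r := by
    have := Real.log_le_sub_one_of_pos hlampos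
    linarith
  calc thompsonDist P x y = Real.log (sInf T) := rfl
    _ ≤ l * r := le_trans hlog hlog2
end

section
/- Let (V, V₊, v) be an order unit space with open cone C := V₊° and let λ > 0. Then for all x, y ∈ C with x ≤ λv and y ≤ λv one has ‖x − y‖_v ≤ λ d_T(x, y). -/
open scoped Topology

/-- In an order unit space `(V, P, v)`, for `l > 0` and `x, y` in the
open cone with `x ≤ l v` and `y ≤ l v`, one has `‖x - y‖_v ≤ l d_T(x, y)`. -/
theorem norm_le_mul_thompsonDist
    {V : Type*} [NormedAddCommGroup V] [NormedSpace ℝ V]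
    (P : Set V) (v : V) (hV : IsOrderUnitSpace V P v)
    (l : ℝ) (hl : 0 < l) (x y : V)
    (hx : x ∈ openCone P v) (hy : y ∈ openCone P v)
    (hxl : l • v - x ∈ P) (hyl : l • v - y ∈ P) :
    ‖x - y‖ ≤ l * thompsonDist P x y := by
  obtain ⟨ε, hε, hxe⟩ := hx
  obtain ⟨δ, hδ, hye⟩ := hy
  set S : Set ℝ := {r : ℝ | 1 ≤ r ∧ x - r⁻¹ • y ∈ P ∧ r • y - x ∈ P} with hS
  -- key pointwise estimate
  have key : ∀ r ∈ S, ‖x - y‖ ≤ l * (1 - r⁻¹) := by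
    intro r hr
    obtain ⟨hr1, hryx, hrxy⟩ := hr
    have hr0 : (0 : ℝ) < r := lt_of_lt_of_le one_pos hr1
    have hinv : r⁻¹ ≤ 1 := inv_le_one_of_one_le₀ hr1
    have hinv0 : (0 : ℝ) ≤ r⁻¹ := by positivity
    have h2 : y - r⁻¹ • x ∈ P := by
      have := hV.smul_mem r⁻¹ hinv0 _ hrxy
      rwa [smul_sub, smul_smul, inv_mul_cancel₀ (ne_of_gt hr0), one_smul] at this
    have hs0 : (0 : ℝ) ≤ l * (1 - r⁻¹) := by
      apply mul_nonneg hl.le; linarith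
    have hmem1 : (x - y) + (l * (1 - r⁻¹)) • v ∈ P := by
      have : (x - y) + (l * (1 - r⁻¹)) • v
          = (x - r⁻¹ • y) + (1 - r⁻¹) • (l • v - y) := by
        simp only [smul_sub, smul_smul]; module
      rw [this]
      exact hV.add_mem _ hryx _ (hV.smul_mem _ (by linarith) _ hyl)
    have hmem2 : (l * (1 - r⁻¹)) • v - (x - y) ∈ P := by
      have : (l * (1 - r⁻¹)) • v - (x - y)
          = (y - r⁻¹ • x) + (1 - r⁻¹) • (l • v - x) := by
        simp only [smul_sub, smul_smul]; module
      rw [this]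
      exact hV.add_mem _ h2 _ (hV.smul_mem _ (by linarith) _ hxl)
    rw [hV.norm_eq]
    exact csInf_le ⟨0, fun s hs => hs.1⟩ ⟨hs0, hmem1, hmem2⟩
  -- S is nonempty
  have hSne : S.Nonempty := by
    refine ⟨max 1 (max (l / ε) (l / δ)), le_max_left _ _, ?_, ?_⟩
    · set r₀ : ℝ := max 1 (max (l / ε) (l / δ)) with hr₀
      have hr0pos : (0 : ℝ) < r₀ := lt_of_lt_of_le one_pos (le_max_left _ _)
      have hle : l / ε ≤ r₀ := le_trans (le_max_left _ _) (le_max_right _ _)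
      have hinvle : r₀⁻¹ * l ≤ ε := by
        rw [inv_mul_le_iff₀ hr0pos]
        rw [div_le_iff₀ hε] at hle
        linarith [mul_comm r₀ ε]
      have : x - r₀⁻¹ • y = (x - ε • v) + (ε - r₀⁻¹ * l) • v + r₀⁻¹ • (l • v - y) := by
        simp only [smul_sub, smul_smul, sub_smul]; module
      rw [this]
      exact hV.add_mem _ (hV.add_mem _ hxe _
        (hV.smul_mem _ (by linarith) _ hV.unit_mem)) _
        (hV.smul_mem _ (by positivity) _ hyl)
    · set r₀ : ℝ := max 1 (max (l / ε) (l / δ)) with hr₀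
      have hr0pos : (0 : ℝ) < r₀ := lt_of_lt_of_le one_pos (le_max_left _ _)
      have hle : l / δ ≤ r₀ := le_trans (le_max_right _ _) (le_max_right _ _)
      have hld : l ≤ r₀ * δ := by
        rw [div_le_iff₀ hδ] at hle; linarith
      have : r₀ • y - x = r₀ • (y - δ • v) + (r₀ * δ - l) • v + (l • v - x) := by
        simp only [smul_sub, smul_smul, sub_smul]; module
      rw [this]
      exact hV.add_mem _ (hV.add_mem _ (hV.smul_mem _ hr0pos.le _ hye) _
        (hV.smul_mem _ (by linarith) _ hV.unit_mem)) _ hxl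
  -- every element of S is at least exp (‖x - y‖ / l)
  have hc : ∀ r ∈ S, Real.exp (‖x - y‖ / l) ≤ r := by
    intro r hr
    have hr0 : (0 : ℝ) < r := lt_of_lt_of_le one_pos hr.1
    have h1 : ‖x - y‖ / l ≤ 1 - r⁻¹ := by
      rw [div_le_iff₀ hl]
      calc ‖x - y‖ ≤ l * (1 - r⁻¹) := key r hr
        _ = (1 - r⁻¹) * l := mul_comm _ _
    calc Real.exp (‖x - y‖ / l) ≤ Real.exp (1 - r⁻¹) := Real.exp_le_exp.2 h1
      _ ≤ Real.exp (Real.log r) := Real.exp_le_exp.2 (Real.one_sub_inv_le_log_of_pos hr0)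
      _ = r := Real.exp_log hr0
  have hm : Real.exp (‖x - y‖ / l) ≤ sInf S := le_csInf hSne hc
  have hmpos : (0 : ℝ) < sInf S := lt_of_lt_of_le (Real.exp_pos _) hm
  have hlog : ‖x - y‖ / l ≤ Real.log (sInf S) :=
    (Real.le_log_iff_exp_le hmpos).2 hm
  have : ‖x - y‖ ≤ l * Real.log (sInf S) := by
    rw [div_le_iff₀ hl] at hlog
    linarith [mul_comm (Real.log (sInf S)) l]
  simpa [thompsonDist, hS] using this
end

section
/- Let (V, V₊, v) and (W, W₊, w) be order unit spaces with open cones C := V₊° and D := W₊°, and let Φ: C → D be a gauge-reversing bijection with Φ(v) = w. Let λ > 0. Then for all x, y ∈ C with x ≥ λ⁻¹v and y ≥ λ⁻¹v one has ‖Φ(x) − Φ(y)‖_w ≤ λ²‖x − y‖_v. -/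
open scoped Topology

section Aux

variable {V : Type*} [NormedAddCommGroup V] [NormedSpace ℝ V]
variable {W : Type*} [NormedAddCommGroup W] [NormedSpace ℝ W]

lemma IsOrderUnitSpace.zero_mem {P : Set V} {v : V} (hV : IsOrderUnitSpace V P v) :
    (0 : V) ∈ P := by
  have := hV.smul_mem 0 le_rfl v hV.unit_mem
  simpa using this

lemma aux_norm_smul_sub_mem {P : Set V} {v : V} (hV : IsOrderUnitSpace V P v) (z : V) :
    ‖z‖ • v - z ∈ P := by
  set S : Set ℝ := {r : ℝ | 0 ≤ r ∧ z + r • v ∈ P ∧ r • v - z ∈ P} with hS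
  have hn : ‖z‖ = sInf S := hV.norm_eq z
  have hS_bdd : BddBelow S := ⟨0, fun r hr => hr.1⟩
  have hS_ne : S.Nonempty := by
    obtain ⟨r₁, hr₁, hmem₁⟩ := hV.unit_order z
    obtain ⟨r₂, hr₂, hmem₂⟩ := hV.unit_order (-z)
    refine ⟨max r₁ r₂, le_of_lt (lt_max_of_lt_left hr₁), ?_, ?_⟩
    · have h1 : z + max r₁ r₂ • v = (r₂ • v - (-z)) + (max r₁ r₂ - r₂) • v := by
        module
      rw [h1]
      exact hV.add_mem _ hmem₂ _ (hV.smul_mem _ (by simp [sub_nonneg]) _ hV.unit_mem)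
    · have h1 : max r₁ r₂ • v - z = (r₁ • v - z) + (max r₁ r₂ - r₁) • v := by
        module
      rw [h1]
      exact hV.add_mem _ hmem₁ _ (hV.smul_mem _ (by simp [sub_nonneg]) _ hV.unit_mem)
  have key : ∀ ε : ℝ, 0 < ε → (‖z‖ + ε) • v - z ∈ P := by
    intro ε hε
    obtain ⟨r, hrS, hrlt⟩ := exists_lt_of_csInf_lt hS_ne
      (lt_add_of_pos_right (sInf S) hε)
    rw [← hn] at hrlt
    have h1 : (‖z‖ + ε) • v - z = (r • v - z) + (‖z‖ + ε - r) • v := by module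
    rw [h1]
    exact hV.add_mem _ hrS.2.2 _ (hV.smul_mem _ (by linarith) _ hV.unit_mem)
  have harch : -(z - ‖z‖ • v) ∈ P := by
    apply hV.archimedean (z - ‖z‖ • v) v
    intro r hr
    rcases eq_or_lt_of_le hr with hr0 | hr0
    · simpa [← hr0] using hV.unit_mem
    · have hrne : r ≠ 0 := ne_of_gt hr0
      have h1 : v - r • (z - ‖z‖ • v) = r • ((‖z‖ + r⁻¹) • v - z) := by
        match_scalars <;> field_simp <;> ring
      rw [h1]
      exact hV.smul_mem _ hr _ (key _ (inv_pos.mpr hr0))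
  simpa [neg_sub] using harch

lemma aux_norm_le {P : Set V} {v : V} (hV : IsOrderUnitSpace V P v) {z : V} {r : ℝ}
    (h0 : 0 ≤ r) (h1 : z + r • v ∈ P) (h2 : r • v - z ∈ P) : ‖z‖ ≤ r := by
  rw [hV.norm_eq]
  exact csInf_le ⟨0, fun s hs => hs.1⟩ ⟨h0, h1, h2⟩

lemma aux_smul_openCone {P : Set V} {v : V} (hV : IsOrderUnitSpace V P v) {x : V}
    (hx : x ∈ openCone P v) {r : ℝ} (hr : 0 < r) : r • x ∈ openCone P v := by
  obtain ⟨ε, hε, hmem⟩ := hx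
  refine ⟨r * ε, mul_pos hr hε, ?_⟩
  have h1 : r • x - (r * ε) • v = r • (x - ε • v) := by module
  rw [h1]
  exact hV.smul_mem _ hr.le _ hmem

lemma aux_oneside
    {P : Set V} {v : V} {Q : Set W} {w : W}
    (hV : IsOrderUnitSpace V P v) (hW : IsOrderUnitSpace W Q w)
    (Φ : V → W) (hΦ : GaugeReversing P v Q w Φ) (hΦv : Φ v = w)
    {l : ℝ} (hl : 0 < l) {x y : V}
    (hx : x ∈ openCone P v) (hy : y ∈ openCone P v)
    (hyl : y - l⁻¹ • v ∈ P)
    {m : ℝ} (hm : 0 ≤ m) (hmv : m • v - (x - y) ∈ P) :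
    (l ^ 2 * m) • w - (Φ y - Φ x) ∈ Q := by
  have hv_oc : v ∈ openCone P v := by
    refine ⟨1/2, by norm_num, ?_⟩
    have h1 : v - (1/2 : ℝ) • v = (1/2 : ℝ) • v := by module
    rw [h1]
    exact hV.smul_mem _ (by norm_num) _ hV.unit_mem
  set t : ℝ := 1 + l * m with ht_def
  have ht : 0 < t := by nlinarith
  have ht1 : (1 : ℝ) ≤ t := by nlinarith
  have htinv : t⁻¹ ≤ 1 := inv_le_one_of_one_le₀ ht1
  have htinv0 : 0 < t⁻¹ := inv_pos.mpr ht
  -- l • y - v ∈ P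
  have hvy : l • y - v ∈ P := by
    have := hV.smul_mem l hl.le _ hyl
    have h1 : l • (y - l⁻¹ • v) = l • y - v := by
      rw [smul_sub, smul_smul, mul_inv_cancel₀ (ne_of_gt hl), one_smul]
    rwa [h1] at this
  -- t • y - x ∈ P
  have h1 : t • y - x ∈ P := by
    have hsum := hV.add_mem _ hmv _ (hV.smul_mem m hm _ hvy)
    have heq : (m • v - (x - y)) + m • (l • y - v) = t • y - x := by
      rw [ht_def]; module
    rwa [heq] at hsum
  have hy' : t • y ∈ openCone P v := aux_smul_openCone hV hy ht
  have h2 : Φ x - Φ (t • y) ∈ Q := (hΦ.2.2 x hx _ hy').mp h1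
  have hhom : Φ (t • y) = t⁻¹ • Φ y := hΦ.2.1 y hy t ht
  rw [hhom] at h2
  -- l • w - Φ y ∈ Q
  have hlv_oc : l⁻¹ • v ∈ openCone P v := aux_smul_openCone hV hv_oc (inv_pos.mpr hl)
  have hw : l • w - Φ y ∈ Q := by
    have h3 : Φ (l⁻¹ • v) - Φ y ∈ Q := (hΦ.2.2 _ hlv_oc y hy).mp hyl
    have h4 : Φ (l⁻¹ • v) = l • w := by
      rw [hΦ.2.1 v hv_oc l⁻¹ (inv_pos.mpr hl), inv_inv, hΦv]
    rwa [h4] at h3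
  -- combine
  set c : ℝ := 1 - t⁻¹ with hc_def
  have hc : 0 ≤ c := by rw [hc_def]; linarith
  have hct : c * t = l * m := by
    rw [hc_def, sub_mul, one_mul, inv_mul_cancel₀ (ne_of_gt ht), ht_def]; ring
  set d : ℝ := l ^ 2 * m - c * l with hd_def
  have hd : 0 ≤ d := by
    have hcle : c ≤ l * m := by nlinarith
    rw [hd_def]
    nlinarith
  have hT : (l ^ 2 * m) • w - (Φ y - Φ x) =
      (Φ x - t⁻¹ • Φ y) + (c • (l • w - Φ y) + d • w) := by
    rw [hc_def, hd_def]; module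
  rw [hT]
  exact hW.add_mem _ h2 _
    (hW.add_mem _ (hW.smul_mem c hc _ hw) _ (hW.smul_mem d hd _ hW.unit_mem))

end Aux

/-- Let `Φ` be a gauge-reversing bijection between the open cones of
order unit spaces `(V, P, v)` and `(W, Q, w)` with `Φ v = w`, and let `l > 0`. Then for
all `x, y` in the open cone with `x ≥ l⁻¹ v` and `y ≥ l⁻¹ v` one has
`‖Φ x - Φ y‖_w ≤ l² ‖x - y‖_v`. -/
theorem norm_sub_image_le_of_gaugeReversing
    {V : Type*} [NormedAddCommGroup V] [NormedSpace ℝ V]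
    {W : Type*} [NormedAddCommGroup W] [NormedSpace ℝ W]
    (P : Set V) (v : V) (Q : Set W) (w : W)
    (hV : IsOrderUnitSpace V P v) (hW : IsOrderUnitSpace W Q w)
    (Φ : V → W) (hΦ : GaugeReversing P v Q w Φ) (hΦv : Φ v = w)
    (l : ℝ) (hl : 0 < l) (x y : V)
    (hx : x ∈ openCone P v) (hy : y ∈ openCone P v)
    (hxl : x - l⁻¹ • v ∈ P) (hyl : y - l⁻¹ • v ∈ P) :
    ‖Φ x - Φ y‖ ≤ l ^ 2 * ‖x - y‖ := by
  set m : ℝ := ‖x - y‖ with hm_def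
  have hm : 0 ≤ m := norm_nonneg _
  have hmv₁ : m • v - (x - y) ∈ P := aux_norm_smul_sub_mem hV (x - y)
  have hmv₂ : m • v - (y - x) ∈ P := by
    have := aux_norm_smul_sub_mem hV (y - x)
    rwa [norm_sub_rev, ← hm_def] at this
  have hA : (l ^ 2 * m) • w - (Φ y - Φ x) ∈ Q :=
    aux_oneside hV hW Φ hΦ hΦv hl hx hy hyl hm hmv₁
  have hB : (l ^ 2 * m) • w - (Φ x - Φ y) ∈ Q :=
    aux_oneside hV hW Φ hΦ hΦv hl hy hx hxl hm hmv₂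
  have h0 : 0 ≤ l ^ 2 * m := by positivity
  have h1 : (Φ x - Φ y) + (l ^ 2 * m) • w ∈ Q := by
    have heq : (Φ x - Φ y) + (l ^ 2 * m) • w = (l ^ 2 * m) • w - (Φ y - Φ x) := by
      module
    rw [heq]; exact hA
  exact aux_norm_le hW h0 h1 hB
end

section
/- Let A be a real vector space, e ∈ A, and U: A → End(A) a quadratic map (i.e. U(λx) = λ²U(x) for all λ ∈ ℝ, x ∈ A, and the polarization U(x,y) := ½(U(x+y) − U(x) − U(y)) is bilinear in (x,y)) satisfying the quadratic Jordan axioms: (QJ1) U(e) = id_A; (QJ2) U(x)U(y,z)x = U(U(x)y, x)z for all x,y,z ∈ A; (QJ3) U(U(x)y) = U(x)U(y)U(x) for all x,y ∈ A. Define the product a∘b := U(a,b)e. Then ∘ is a commutative bilinear product on A with unit element e satisfying the Jordan identity x∘(y∘(x∘x)) = (x∘y)∘(x∘x) for all x,y ∈ A; moreover, writing T(a) for the operator b ↦ a∘b, one has U(a) = 2T(a)² − T(a∘a) for every a ∈ A. -/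
/-- The polarization `U(x,y) := ½ (U(x+y) − U(x) − U(y))` of a quadratic map
`U : A → End(A)`. -/
noncomputable def Upol {A : Type*} [AddCommGroup A] [Module ℝ A]
    (U : A → Module.End ℝ A) (x y : A) : Module.End ℝ A :=
  (1 / 2 : ℝ) • (U (x + y) - U x - U y)

/-- Let `A` be a real vector space, `e ∈ A` and `U : A → End(A)` a
quadratic map satisfying the quadratic Jordan axioms (QJ1)–(QJ3). Then the product
`a ∘ b := U(a,b) e` is a commutative bilinear product with unit `e` satisfying the
Jordan identity, and `U(a) = 2 T(a)² − T(a ∘ a)` where `T(a) b := a ∘ b`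
(stated pointwise). -/
theorem quadraticJordan_to_linearJordan {A : Type*} [AddCommGroup A] [Module ℝ A]
    (e : A) (U : A → Module.End ℝ A)
    (hhom : ∀ (r : ℝ) (x : A), U (r • x) = (r ^ 2) • U x)
    (hbil₁ : ∀ x : A, IsLinearMap ℝ (fun y : A => Upol U x y))
    (hbil₂ : ∀ y : A, IsLinearMap ℝ (fun x : A => Upol U x y))
    (hQJ1 : U e = 1)
    (hQJ2 : ∀ x y z : A, U x (Upol U y z x) = Upol U (U x y) x z)
    (hQJ3 : ∀ x y : A, U (U x y) = U x * U y * U x) :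
    (∀ a b : A, Upol U a b e = Upol U b a e) ∧
    (∀ a : A, IsLinearMap ℝ (fun b : A => Upol U a b e)) ∧
    (∀ b : A, IsLinearMap ℝ (fun a : A => Upol U a b e)) ∧
    (∀ a : A, Upol U e a e = a) ∧
    (∀ x y : A,
      Upol U x (Upol U y (Upol U x x e) e) e = Upol U (Upol U x y e) (Upol U x x e) e) ∧
    (∀ a b : A,
      U a b = (2 : ℝ) • Upol U a (Upol U a b e) e - Upol U (Upol U a a e) b e) := by
  have sym : ∀ a b : A, Upol U a b = Upol U b a := by
    intro a b; unfold Upol; rw [add_comm a b]; module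
  have expand : ∀ a b : A, U (a + b) = U a + U b + (2:ℝ) • Upol U a b := by
    intro a b; unfold Upol; module
  have sq : ∀ a : A, Upol U a a = U a := by
    intro a
    unfold Upol
    rw [← two_smul ℝ a, hhom]
    module
  have sh : ∀ y z : A, Upol U y z e = Upol U y e z := by
    intro y z
    have h := hQJ2 e y z
    rw [hQJ1] at h
    simpa using h
  have unit : ∀ a : A, Upol U e a e = a := by
    intro a
    rw [sh e a, sq e, hQJ1]
    simp
  have hPe : ∀ a : A, Upol U a e e = a := by
    intro a; rw [sym a e]; exact unit a
  have bl : ∀ (u₁ u₂ v : A), Upol U (u₁ + u₂) v = Upol U u₁ v + Upol U u₂ v :=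
    fun u₁ u₂ v => (hbil₂ v).map_add u₁ u₂
  have bls : ∀ (r : ℝ) (u v : A), Upol U (r • u) v = r • Upol U u v :=
    fun r u v => (hbil₂ v).map_smul r u
  have blsub : ∀ (u₁ u₂ v : A), Upol U (u₁ - u₂) v = Upol U u₁ v - Upol U u₂ v :=
    fun u₁ u₂ v => (IsLinearMap.mk' _ (hbil₂ v)).map_sub u₁ u₂
  have br : ∀ (u v₁ v₂ : A), Upol U u (v₁ + v₂) = Upol U u v₁ + Upol U u v₂ :=
    fun u v₁ v₂ => (hbil₁ u).map_add v₁ v₂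
  have brs : ∀ (r : ℝ) (u v : A), Upol U u (r • v) = r • Upol U u v :=
    fun r u v => (hbil₁ u).map_smul r v
  have brsub : ∀ (u v₁ v₂ : A), Upol U u (v₁ - v₂) = Upol U u v₁ - Upol U u v₂ :=
    fun u v₁ v₂ => (IsLinearMap.mk' _ (hbil₁ u)).map_sub v₁ v₂
  have comm : ∀ a b : A, Upol U a b e = Upol U b a e := by
    intro a b; rw [sym]
  -- the main operator formula
  have main : ∀ a b : A,
      U a b = (2 : ℝ) • Upol U a (Upol U a b e) e - Upol U (Upol U a a e) b e := by
    intro x z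
    have hB : ∀ w : A, U w (Upol U z e w) = Upol U (U w e) w z := by
      intro w
      have h := hQJ2 w e z
      rwa [sym e z] at h
    have key : ∀ t : ℝ,
        U x (Upol U z e x) + t • (U x z) + (2*t) • (Upol U x e (Upol U z e x))
          + (2*t^2) • (Upol U x e z) + t^2 • (Upol U z e x) + t^3 • z
        = Upol U (U x e) x z + t • (Upol U (U x e) e z) + (2*t) • (U x z)
          + (3*t^2) • (Upol U x e z) + t^3 • z := by
      intro t
      have hU : U (x + t • e) = U x + (2*t) • Upol U x e + (t^2) • (1 : Module.End ℝ A) := by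
        rw [expand, hhom, hQJ1, brs]; module
      have harg : Upol U z e (x + t • e) = Upol U z e x + t • z := by
        rw [map_add, map_smul, hPe]
      have hse : U (x + t • e) e = U x e + (2*t) • x + (t^2) • e := by
        rw [hU]
        simp [hPe]
      have h := hB (x + t • e)
      rw [harg, hse, hU] at h
      simp only [LinearMap.add_apply, LinearMap.smul_apply, Module.End.one_apply,
        map_add, map_smul, bl, bls, br, brs, sq, sym e x, hQJ1] at h
      linear_combination (norm := module) h
    have goal' : U x z = (2:ℝ) • (Upol U x e (Upol U z e x)) - Upol U (U x e) e z := by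
      linear_combination (norm := module) ((1:ℝ)/2) • key (-1) - ((1:ℝ)/2) • key 1
    have e1 : Upol U x z e = Upol U z e x := by
      rw [sym x z, sh z x]
    rw [sq x, sh (U x e) z, sh x (Upol U x z e), e1]
    exact goal'
  refine ⟨comm, ?_, ?_, unit, ?_, main⟩
  · intro a
    exact ⟨fun u v => by rw [br, LinearMap.add_apply],
           fun r u => by rw [brs, LinearMap.smul_apply]⟩
  · intro b
    exact ⟨fun u v => by rw [bl, LinearMap.add_apply],
           fun r u => by rw [bls, LinearMap.smul_apply]⟩
  · -- Jordan identity
    intro x y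
    have A' : U x (Upol U y x e) = Upol U (U x y) x e := by
      have h := hQJ2 x y e
      rwa [← sh y x] at h
    rw [comm y x, main x (Upol U x y e), main x y] at A'
    rw [blsub, bls] at A'
    simp only [LinearMap.sub_apply, LinearMap.smul_apply] at A'
    rw [comm (Upol U x (Upol U x y e) e) x,
        comm (Upol U (Upol U x x e) y e) x] at A'
    -- A' : 2•cx(cx(cxy)) - cs(cxy) = 2•cx(cx(cxy)) - cx(csy)
    rw [comm y (Upol U x x e), comm (Upol U x y e) (Upol U x x e)]
    linear_combination (norm := module) A'
end

section
/- Let K be the state space of a complete order unit space (V, V₊, v) with V ≠ 0. Then: (1) every affine upper semicontinuous function g: K → [−∞, ∞) attains its supremum at an extreme point of K, i.e. there exists an extreme point ψ of K with g(ψ) = sup_{ρ∈K} g(ρ); (2) every affine lower semicontinuous function h: K → (−∞, ∞] attains its infimum at an extreme point of K. -/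
open scoped Topology

section Aux
open Set
open scoped Topology

lemma isClosed_usc_level {X : Type*} [TopologicalSpace X] {K : Set X} (hKc : IsClosed K)
    {g : X → EReal} (hg : UpperSemicontinuousOn g K) (a : EReal) :
    IsClosed {ρ ∈ K | a ≤ g ρ} := by
  rw [← closure_subset_iff_isClosed]
  intro x hx
  have hsub : {ρ ∈ K | a ≤ g ρ} ⊆ K := fun ρ hρ => hρ.1
  have hxK : x ∈ K := hKc.closure_subset (closure_mono hsub hx)
  refine ⟨hxK, ?_⟩
  by_contra hlt
  push_neg at hlt
  have hev : ∀ᶠ y in 𝓝[K] x, g y < a := hg x hxK a hlt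
  have hnb : (𝓝[{ρ ∈ K | a ≤ g ρ}] x).NeBot := mem_closure_iff_nhdsWithin_neBot.1 hx
  have hev' : ∀ᶠ y in 𝓝[{ρ ∈ K | a ≤ g ρ}] x, g y < a :=
    (nhdsWithin_mono x hsub) hev
  have hmem : ∀ᶠ y in 𝓝[{ρ ∈ K | a ≤ g ρ}] x, y ∈ {ρ ∈ K | a ≤ g ρ} :=
    self_mem_nhdsWithin
  obtain ⟨y, hy1, hy2⟩ := (hev'.and hmem).exists
  exact absurd hy2.2 (not_le.2 hy1)

lemma usc_attains {X : Type*} [TopologicalSpace X] [T2Space X] {K : Set X}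
    (hK : IsCompact K) (hne : K.Nonempty)
    {g : X → EReal} (hg : UpperSemicontinuousOn g K) :
    ∃ ψ ∈ K, g ψ = sSup (g '' K) := by
  set M := sSup (g '' K) with hM
  rcases eq_or_ne M ⊥ with hbot | hbot
  · obtain ⟨ψ, hψ⟩ := hne
    refine ⟨ψ, hψ, ?_⟩
    have : g ψ ≤ M := le_sSup ⟨ψ, hψ, rfl⟩
    rw [hbot] at this ⊢
    exact le_bot_iff.1 this
  · have hι : Nonempty {a : EReal // a < M} := ⟨⟨⊥, Ne.bot_lt hbot⟩⟩
    set t : {a : EReal // a < M} → Set X := fun a => {ρ ∈ K | a.1 ≤ g ρ} with ht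
    have hmono : ∀ a b : {a : EReal // a < M}, a.1 ≤ b.1 → t b ⊆ t a :=
      fun a b hab ρ hρ => ⟨hρ.1, le_trans hab hρ.2⟩
    have htd : Directed (· ⊇ ·) t := by
      intro a b
      rcases le_total a.1 b.1 with h | h
      · exact ⟨b, hmono a b h, subset_rfl⟩
      · exact ⟨a, subset_rfl, hmono b a h⟩
    have htn : ∀ a, (t a).Nonempty := by
      rintro ⟨a, ha⟩
      obtain ⟨b, ⟨ρ, hρ, rfl⟩, hab⟩ := lt_sSup_iff.1 ha
      exact ⟨ρ, hρ, hab.le⟩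
    have htcl : ∀ a, IsClosed (t a) := fun a => isClosed_usc_level hK.isClosed hg a.1
    have htc : ∀ a, IsCompact (t a) := fun a => hK.of_isClosed_subset (htcl a) (fun ρ hρ => hρ.1)
    obtain ⟨ψ, hψ⟩ := IsCompact.nonempty_iInter_of_directed_nonempty_isCompact_isClosed
      t htd htn htc htcl
    simp only [mem_iInter] at hψ
    have hψK : ψ ∈ K := (hψ ⟨⊥, Ne.bot_lt hbot⟩).1
    refine ⟨ψ, hψK, le_antisymm (le_sSup ⟨ψ, hψK, rfl⟩) ?_⟩
    by_contra hlt
    push_neg at hlt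
    obtain ⟨c, hc1, hc2⟩ := exists_between hlt
    exact absurd ((hψ ⟨c, hc2⟩).2) (not_le.2 hc1)

noncomputable instance {V : Type*} [NormedAddCommGroup V] [NormedSpace ℝ V] :
    LocallyConvexSpace ℝ (WeakDual ℝ V) :=
  WeakBilin.locallyConvexSpace (B := topDualPairing ℝ V)


lemma bauer_max {V : Type*} [NormedAddCommGroup V] [NormedSpace ℝ V]
    {K : Set (WeakDual ℝ V)} (hK : IsCompact K) (hne : K.Nonempty)
    {g : WeakDual ℝ V → EReal} (hgtop : ∀ ρ ∈ K, g ρ ≠ ⊤)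
    (hgaff : ∀ ρ ∈ K, ∀ σ ∈ K, ∀ t : ℝ, 0 ≤ t → t ≤ 1 →
      g ((1 - t) • ρ + t • σ) = ((1 - t : ℝ) : EReal) * g ρ + ((t : ℝ) : EReal) * g σ)
    (hgusc : UpperSemicontinuousOn g K) :
    ∃ ψ ∈ K.extremePoints ℝ, g ψ = sSup (g '' K) := by
  obtain ⟨ψ₀, hψ₀K, hψ₀⟩ := usc_attains hK hne hgusc
  set M := sSup (g '' K) with hM
  have hMtop : M ≠ ⊤ := hψ₀ ▸ hgtop ψ₀ hψ₀K
  have hle : ∀ ρ ∈ K, g ρ ≤ M := fun ρ hρ => le_sSup ⟨ρ, hρ, rfl⟩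
  rcases eq_or_ne M ⊥ with hbot | hbot
  · obtain ⟨ψ, hψ⟩ := hK.extremePoints_nonempty hne
    refine ⟨ψ, hψ, ?_⟩
    have := hle ψ (extremePoints_subset hψ)
    rw [hbot] at this ⊢
    exact le_bot_iff.1 this
  · obtain ⟨m, hm⟩ : ∃ m : ℝ, M = (m : EReal) := ⟨M.toReal, (EReal.coe_toReal hMtop hbot).symm⟩
    set F := {ρ ∈ K | M ≤ g ρ} with hF
    have hFsub : F ⊆ K := fun ρ hρ => hρ.1
    have hFne : F.Nonempty := ⟨ψ₀, hψ₀K, hψ₀.ge⟩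
    have hFcl : IsClosed F := isClosed_usc_level hK.isClosed hgusc M
    have hFc : IsCompact F := hK.of_isClosed_subset hFcl hFsub
    have hgF : ∀ ρ ∈ F, g ρ = M := fun ρ hρ => le_antisymm (hle ρ hρ.1) hρ.2
    -- F is an extreme subset of K
    have hext : IsExtreme ℝ K F := by
      refine ⟨hFsub, ?_⟩
      intro x hx y hy z hz hseg
      obtain ⟨a, b, ha, hb, hab, rfl⟩ := hseg
      have hgz : g (a • x + b • y) = M := hgF _ hz
      have hb1 : b ≤ 1 := by linarith
      have ha' : a = 1 - b := by linarith
      have haff := hgaff x hx y hy b hb.le hb1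
      have key : ((1 - b : ℝ) : EReal) * g x + ((b : ℝ) : EReal) * g y = (m : EReal) := by
        rw [ha'] at hgz
        rw [← haff, hgz, hm]
      -- both g x and g y are not ⊥
      have hxM : g x ≤ M := hle x hx
      have hyM : g y ≤ M := hle y hy
      have hxbot : g x ≠ ⊥ := by
        intro h
        rw [h] at key
        rw [show ((1 - b : ℝ) : EReal) * (⊥ : EReal) = ⊥ from
          EReal.coe_mul_bot_of_pos (by linarith)] at key
        rw [EReal.bot_add] at key
        exact (EReal.bot_ne_coe m) key
      have hybot : g y ≠ ⊥ := by
        intro h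
        rw [h] at key
        rw [show ((b : ℝ) : EReal) * (⊥ : EReal) = ⊥ from
          EReal.coe_mul_bot_of_pos hb] at key
        rw [EReal.add_bot] at key
        exact (EReal.bot_ne_coe m) key
      obtain ⟨xr, hxr⟩ : ∃ r : ℝ, g x = (r : EReal) :=
        ⟨(g x).toReal, (EReal.coe_toReal (hgtop x hx) hxbot).symm⟩
      obtain ⟨yr, hyr⟩ : ∃ r : ℝ, g y = (r : EReal) :=
        ⟨(g y).toReal, (EReal.coe_toReal (hgtop y hy) hybot).symm⟩
      rw [hxr, hyr] at key
      rw [hxr, hm] at hxM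
      rw [hyr, hm] at hyM
      have hxM' : xr ≤ m := by exact_mod_cast hxM
      have hyM' : yr ≤ m := by exact_mod_cast hyM
      have key' : (1 - b) * xr + b * yr = m := by exact_mod_cast key
      have hxeq : xr = m := by nlinarith
      have hyeq : yr = m := by nlinarith
      exact ⟨hx, by rw [hxr, hxeq, hm]⟩
    obtain ⟨ψ, hψ⟩ := hFc.extremePoints_nonempty hFne
    exact ⟨ψ, hext.extremePoints_subset_extremePoints hψ, hgF ψ (extremePoints_subset hψ)⟩

lemma ereal_sInf_eq_neg_sSup (s : Set EReal) :
    sInf s = -sSup ((fun x => -x) '' s) := by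
  rw [← neg_neg (sInf s)]
  congr 1
  apply le_antisymm
  · rw [show -sInf s ≤ sSup ((fun x => -x) '' s) ↔
        -sSup ((fun x => -x) '' s) ≤ sInf s from EReal.neg_le]
    refine le_sInf fun a ha => ?_
    rw [show -sSup ((fun x => -x) '' s) ≤ a ↔ -a ≤ sSup ((fun x => -x) '' s) from EReal.neg_le]
    exact le_sSup ⟨a, ha, rfl⟩
  · refine sSup_le ?_
    rintro b ⟨a, ha, rfl⟩
    exact EReal.neg_le_neg_iff.2 (sInf_le ha)

lemma ereal_coe_mul_ne_bot {c : ℝ} (hc : 0 ≤ c) {a : EReal} (ha : a ≠ ⊥) :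
    ((c : ℝ) : EReal) * a ≠ ⊥ := by
  rcases eq_or_lt_of_le hc with h | h
  · rw [← h]; simp
  · induction a with
    | bot => exact absurd rfl ha
    | coe r => rw [← EReal.coe_mul]; exact EReal.coe_ne_bot _
    | top => rw [EReal.coe_mul_top_of_pos h]; simp

lemma usc_neg_of_lsc {X : Type*} [TopologicalSpace X] {K : Set X} {h : X → EReal}
    (hl : LowerSemicontinuousOn h K) :
    UpperSemicontinuousOn (fun ρ => -h ρ) K := by
  intro x hx y hy
  have : -y < h x := EReal.neg_lt_of_neg_lt hy
  filter_upwards [hl x hx (-y) this] with z hz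
  exact EReal.neg_lt_of_neg_lt hz

section AuxOUS
variable {V : Type*} [NormedAddCommGroup V] [NormedSpace ℝ V]
variable {P : Set V} {v : V} (hV : IsOrderUnitSpace V P v)

include hV

lemma v_ne_zero [Nontrivial V] : v ≠ 0 := by
  intro h
  obtain ⟨x, hx⟩ := exists_ne (0 : V)
  apply hx
  have h1 : ∀ y : V, -y ∈ P := by
    intro y
    obtain ⟨r, _, hr⟩ := hV.unit_order y
    rwa [h, smul_zero, zero_sub] at hr
  have h2 : ∀ y : V, y ∈ P := fun y => by simpa using h1 (-y)
  exact hV.proper x (h2 x) (h1 x)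

lemma neg_unit_not_mem [Nontrivial V] {c : ℝ} (hc : c < 0) : c • v ∉ P := by
  intro hmem
  have h1 : (-c) • v ∈ P := hV.smul_mem (-c) (by linarith) v hV.unit_mem
  have h2 : -((-c) • v) ∈ P := by rwa [neg_smul, neg_neg]
  have := hV.proper _ h1 h2
  rcases smul_eq_zero.1 this with h | h
  · linarith
  · exact v_ne_zero hV h

/-- The norm-defining set. -/
lemma normSet_nonempty (x : V) :
    ∃ r : ℝ, 0 ≤ r ∧ x + r • v ∈ P ∧ r • v - x ∈ P := by
  obtain ⟨r₁, hr₁, h₁⟩ := hV.unit_order x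
  obtain ⟨r₂, hr₂, h₂⟩ := hV.unit_order (-x)
  refine ⟨max r₁ r₂, le_max_of_le_left hr₁.le, ?_, ?_⟩
  · have : (max r₁ r₂ - r₂) • v ∈ P := hV.smul_mem _ (by simp [le_max_right]) v hV.unit_mem
    have := hV.add_mem _ this _ h₂
    rw [sub_neg_eq_add] at this
    convert this using 1
    rw [sub_smul]
    abel
  · have : (max r₁ r₂ - r₁) • v ∈ P := hV.smul_mem _ (by simp [le_max_left]) v hV.unit_mem
    have := hV.add_mem _ this _ h₁
    convert this using 1
    rw [sub_smul]
    abel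

lemma normSet_upward {x : V} {r r' : ℝ} (h : 0 ≤ r ∧ x + r • v ∈ P ∧ r • v - x ∈ P)
    (hrr' : r ≤ r') : 0 ≤ r' ∧ x + r' • v ∈ P ∧ r' • v - x ∈ P := by
  have hm : (r' - r) • v ∈ P := hV.smul_mem _ (by linarith) v hV.unit_mem
  refine ⟨le_trans h.1 hrr', ?_, ?_⟩
  · have := hV.add_mem _ h.2.1 _ hm
    convert this using 1
    rw [sub_smul]; abel
  · have := hV.add_mem _ h.2.2 _ hm
    convert this using 1
    rw [sub_smul]; abel

lemma normSet_mem_of_norm_lt {x : V} {r : ℝ} (h : ‖x‖ < r) :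
    0 ≤ r ∧ x + r • v ∈ P ∧ r • v - x ∈ P := by
  set S := {r : ℝ | 0 ≤ r ∧ x + r • v ∈ P ∧ r • v - x ∈ P} with hS
  have hSne : S.Nonempty := normSet_nonempty hV x
  have hx : ‖x‖ = sInf S := hV.norm_eq x
  obtain ⟨a, haS, ha⟩ := Real.lt_sInf_add_pos hSne (show (0:ℝ) < r - ‖x‖ by linarith)
  rw [← hx] at ha
  exact normSet_upward hV haS (by linarith)

lemma state_abs_le (ρ : WeakDual ℝ V) (hρ : ρ ∈ stateSpace P v) (x : V) :
    |ρ x| ≤ ‖x‖ := by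
  have key : ∀ ε > 0, |ρ x| ≤ ‖x‖ + ε := by
    intro ε hε
    obtain ⟨_, h1, h2⟩ := normSet_mem_of_norm_lt hV (show ‖x‖ < ‖x‖ + ε by linarith)
    have e1 : 0 ≤ ρ x + (‖x‖ + ε) := by
      have := hρ.1 _ h1
      rwa [map_add, map_smul, hρ.2, smul_eq_mul, mul_one] at this
    have e2 : 0 ≤ (‖x‖ + ε) - ρ x := by
      have := hρ.1 _ h2
      rwa [map_sub, map_smul, hρ.2, smul_eq_mul, mul_one] at this
    rw [abs_le]; constructor <;> linarith
  by_contra h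
  push_neg at h
  have := key ((|ρ x| - ‖x‖) / 2) (by linarith)
  linarith

lemma stateSpace_isCompact [Nontrivial V] : IsCompact (stateSpace P v) := by
  apply WeakDual.isCompact_of_bounded_of_closed
  · apply (Metric.isBounded_closedBall (x := (0 : StrongDual ℝ V)) (r := 1)).subset
    intro ρ hρ
    rw [Metric.mem_closedBall, dist_zero_right]
    exact ContinuousLinearMap.opNorm_le_bound _ zero_le_one (by
      intro x
      rw [one_mul, Real.norm_eq_abs]
      exact state_abs_le hV _ hρ x)
  · have : stateSpace P v = (⋂ x ∈ P, {ρ : WeakDual ℝ V | 0 ≤ ρ x}) ∩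
        {ρ : WeakDual ℝ V | ρ v = 1} := by
      ext ρ; simp [stateSpace, Set.mem_iInter]
    rw [this]
    apply IsClosed.inter
    · exact isClosed_biInter fun x _ => isClosed_le continuous_const (WeakDual.eval_continuous x)
    · exact isClosed_eq (WeakDual.eval_continuous v) continuous_const


lemma stateSpace_nonempty [Nontrivial V] : (stateSpace P v).Nonempty := by
  classical
  set T : V → Set ℝ := fun x => {r : ℝ | r • v - x ∈ P} with hT
  have htne : ∀ x, (T x).Nonempty := by
    intro x; obtain ⟨r, _, hr⟩ := hV.unit_order x; exact ⟨r, hr⟩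
  have htbdd : ∀ x, BddBelow (T x) := by
    intro x
    obtain ⟨s, _, hs⟩ := hV.unit_order (-x)
    rw [sub_neg_eq_add] at hs
    refine ⟨-s, fun r hr => ?_⟩
    by_contra hlt
    push_neg at hlt
    have hmem : (r + s) • v ∈ P := by
      have := hV.add_mem _ hr _ hs
      convert this using 1
      rw [add_smul]; abel
    exact neg_unit_not_mem hV (show r + s < 0 by linarith) hmem
  have hup : ∀ x : V, ∀ r ∈ T x, ∀ r', r ≤ r' → r' ∈ T x := by
    intro x r hr r' hrr'
    have hm : (r' - r) • v ∈ P := hV.smul_mem _ (by linarith) v hV.unit_mem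
    have := hV.add_mem _ hr _ hm
    show r' • v - x ∈ P
    convert this using 1
    rw [sub_smul]; abel
  set N : V → ℝ := fun x => sInf (T x) with hN
  have hNle : ∀ x, ∀ r ∈ T x, N x ≤ r := fun x r hr => csInf_le (htbdd x) hr
  have hNmem : ∀ x, ∀ r, N x < r → r ∈ T x := by
    intro x r hr
    obtain ⟨a, haT, ha⟩ := Real.lt_sInf_add_pos (htne x) (show (0:ℝ) < r - N x by linarith)
    exact hup x a haT r (by change a < sInf (T x) + _ at ha; linarith [ha])
  have N_add : ∀ x y, N (x + y) ≤ N x + N y := by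
    intro x y
    refine le_of_forall_pos_le_add fun ε hε => ?_
    have hrx : (N x + ε / 2) ∈ T x := hNmem x _ (by linarith)
    have hry : (N y + ε / 2) ∈ T y := hNmem y _ (by linarith)
    have hsum : (N x + ε / 2 + (N y + ε / 2)) • v - (x + y) ∈ P := by
      have := hV.add_mem _ hrx _ hry
      convert this using 1
      rw [add_smul]; abel
    have := hNle (x + y) _ hsum
    linarith
  have h1 : ∀ c : ℝ, 0 < c → ∀ x, N (c • x) ≤ c * N x := by
    intro c hc x
    have key : ∀ ε > 0, N (c • x) ≤ c * N x + ε := by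
      intro ε hε
      have hr : (N x + ε / c) ∈ T x := hNmem x _ (by linarith [div_pos hε hc])
      have : (c * (N x + ε / c)) • v - c • x ∈ P := by
        have := hV.smul_mem c hc.le _ hr
        convert this using 1
        rw [smul_sub, smul_smul]
      have := hNle (c • x) _ this
      rw [mul_add, mul_div_cancel₀ _ (ne_of_gt hc)] at this
      linarith
    by_contra hlt
    push_neg at hlt
    have := key ((N (c • x) - c * N x) / 2) (by linarith)
    linarith
  have N_hom : ∀ c : ℝ, 0 < c → ∀ x, N (c • x) = c * N x := by
    intro c hc x
    refine le_antisymm (h1 c hc x) ?_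
    have := h1 c⁻¹ (inv_pos.2 hc) (c • x)
    rw [smul_smul, inv_mul_cancel₀ (ne_of_gt hc), one_smul] at this
    have h2 : c * N x ≤ c * (c⁻¹ * N (c • x)) :=
      mul_le_mul_of_nonneg_left this hc.le
    rwa [← mul_assoc, mul_inv_cancel₀ (ne_of_gt hc), one_mul] at h2
  have hv0 : v ≠ 0 := v_ne_zero hV
  have H : ∀ c : ℝ, c • v = 0 → c • (1 : ℝ) = 0 := by
    intro c hc
    rcases smul_eq_zero.1 hc with h | h
    · simp [h]
    · exact absurd h hv0
  set f : V →ₗ.[ℝ] ℝ := LinearPMap.mkSpanSingleton' v 1 H with hf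
  have hfdom : f.domain = Submodule.span ℝ {v} := LinearPMap.domain_mkSpanSingleton v 1 H
  have hfN : ∀ x : f.domain, f x ≤ N x.1 := by
    rintro ⟨x, hx⟩
    have hx' : x ∈ Submodule.span ℝ {v} := hfdom ▸ hx
    obtain ⟨t, ht⟩ := Submodule.mem_span_singleton.1 hx'
    have hval : f ⟨x, hx⟩ = t := by
      have : f ⟨t • v, ht ▸ hx⟩ = t • (1 : ℝ) := LinearPMap.mkSpanSingleton'_apply v 1 H t _
      simp only [smul_eq_mul, mul_one] at this
      rw [← this]
      congr 1
      exact Subtype.ext ht.symm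
    rw [hval]
    show t ≤ N x
    rw [← ht]
    refine le_csInf (htne _) fun r hr => ?_
    by_contra hlt
    push_neg at hlt
    have : (r - t) • v ∈ P := by
      have : r • v - t • v ∈ P := hr
      convert this using 1
      rw [sub_smul]
    exact neg_unit_not_mem hV (show r - t < 0 by linarith) this
  obtain ⟨gl, hgf, hgN⟩ := exists_extension_of_le_sublinear f N N_hom N_add hfN
  have hNnorm : ∀ x, N x ≤ ‖x‖ := by
    intro x
    refine le_of_forall_pos_le_add fun ε hε => ?_
    obtain ⟨_, _, h2⟩ := normSet_mem_of_norm_lt hV (show ‖x‖ < ‖x‖ + ε by linarith)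
    exact hNle x _ h2
  have hbound : ∀ x, ‖gl x‖ ≤ 1 * ‖x‖ := by
    intro x
    rw [one_mul, Real.norm_eq_abs, abs_le]
    constructor
    · have := (hgN (-x)).trans (hNnorm (-x))
      rw [map_neg, norm_neg] at this
      linarith
    · exact (hgN x).trans (hNnorm x)
  set ρc : V →L[ℝ] ℝ := gl.mkContinuous 1 hbound with hρc
  set ρ : WeakDual ℝ V := StrongDual.toWeakDual ρc with hρ
  have happ : ∀ x, ρ x = gl x := fun x => rfl
  refine ⟨ρ, fun x hx => ?_, ?_⟩
  · rw [happ]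
    have h0 : (0 : ℝ) ∈ T (-x) := by
      show (0 : ℝ) • v - (-x) ∈ P
      rw [zero_smul, zero_sub, neg_neg]; exact hx
    have hNneg : N (-x) ≤ 0 := hNle _ _ h0
    have := (hgN (-x)).trans hNneg
    rw [map_neg] at this
    linarith
  · rw [happ]
    have hvdom : v ∈ f.domain := hfdom ▸ Submodule.mem_span_singleton_self v
    have := hgf ⟨v, hvdom⟩
    rw [this]
    exact LinearPMap.mkSpanSingleton'_apply_self v 1 H _


end AuxOUS
end Aux


/-- Let `K` be the state space of a nonzero complete order unit
space. (1) Every affine upper semicontinuous `g : K → [−∞, ∞)` attains its supremum at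
an extreme point of `K`. (2) Every affine lower semicontinuous `h : K → (−∞, ∞]`
attains its infimum at an extreme point of `K`. -/
theorem semicontinuous_affine_attains_at_extremePoint
    {V : Type*} [NormedAddCommGroup V] [NormedSpace ℝ V] [CompleteSpace V] [Nontrivial V]
    (P : Set V) (v : V) (hV : IsOrderUnitSpace V P v) :
    (∀ g : WeakDual ℝ V → EReal,
      (∀ ρ ∈ stateSpace P v, g ρ ≠ ⊤) →
      AffineOnKE (stateSpace P v) g →
      UpperSemicontinuousOn g (stateSpace P v) →
      ∃ ψ ∈ Set.extremePoints ℝ (stateSpace P v),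
        g ψ = sSup (g '' stateSpace P v)) ∧
    (∀ h : WeakDual ℝ V → EReal,
      (∀ ρ ∈ stateSpace P v, h ρ ≠ ⊥) →
      AffineOnKE (stateSpace P v) h →
      LowerSemicontinuousOn h (stateSpace P v) →
      ∃ ψ ∈ Set.extremePoints ℝ (stateSpace P v),
        h ψ = sInf (h '' stateSpace P v)) := by
  classical
  set K := stateSpace P v with hK
  have hKc : IsCompact K := stateSpace_isCompact hV
  have hKne : K.Nonempty := stateSpace_nonempty hV
  constructor
  · intro g hgtop hgaff hgusc
    exact bauer_max hKc hKne hgtop hgaff hgusc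
  · intro h hhbot hhaff hhlsc
    set g : WeakDual ℝ V → EReal := fun ρ => -h ρ with hg
    have hgtop : ∀ ρ ∈ K, g ρ ≠ ⊤ := by
      intro ρ hρ hcon
      exact hhbot ρ hρ (EReal.neg_eq_top_iff.1 hcon)
    have hgaff : ∀ ρ ∈ K, ∀ σ ∈ K, ∀ t : ℝ, 0 ≤ t → t ≤ 1 →
        g ((1 - t) • ρ + t • σ) = ((1 - t : ℝ) : EReal) * g ρ + ((t : ℝ) : EReal) * g σ := by
      intro ρ hρ σ hσ t ht ht1
      have haff := hhaff ρ hρ σ hσ t ht ht1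
      show -h ((1 - t) • ρ + t • σ) = ((1 - t : ℝ) : EReal) * (-h ρ) + ((t : ℝ) : EReal) * (-h σ)
      rw [haff, EReal.neg_add
        (Or.inl (ereal_coe_mul_ne_bot (by linarith) (hhbot ρ hρ)))
        (Or.inr (ereal_coe_mul_ne_bot ht (hhbot σ hσ))), sub_eq_add_neg, ← mul_neg, ← mul_neg]
    have hgusc : UpperSemicontinuousOn g K := usc_neg_of_lsc hhlsc
    obtain ⟨ψ, hψ, hgψ⟩ := bauer_max hKc hKne hgtop hgaff hgusc
    refine ⟨ψ, hψ, ?_⟩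
    calc h ψ = -g ψ := (neg_neg _).symm
      _ = -sSup (g '' K) := by rw [hgψ]
      _ = sInf (h '' K) := by
          rw [ereal_sInf_eq_neg_sSup, Set.image_image]
end

section
/- Let K be the state space of a complete order unit space (V, V₊, v) with V ≠ 0, and let h, h': K → (−∞, ∞] be affine lower semicontinuous functions. If h(ψ) ≤ h'(ψ) for every extreme point ψ of K, then h(ρ) ≤ h'(ρ) for every ρ ∈ K. -/
open scoped Topology

open Filter Set Topology

set_option linter.unusedSectionVars false


section Helpers

lemma auxEReal_mul_ne_bot {r : ℝ} (hr : 0 < r) {x : EReal} (hx : x ≠ ⊥) :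
    (r : EReal) * x ≠ ⊥ := by
  induction x with
  | bot => exact absurd rfl hx
  | coe y => rw [← EReal.coe_mul]; exact EReal.coe_ne_bot _
  | top => rw [EReal.coe_mul_top_of_pos hr]; exact (by simp)

lemma auxEReal_add_coe_ne_bot {x : EReal} (hx : x ≠ ⊥) (c : ℝ) : x + (c : EReal) ≠ ⊥ := by
  induction x with
  | bot => exact absurd rfl hx
  | coe y => rw [← EReal.coe_add]; exact EReal.coe_ne_bot _
  | top => rw [EReal.top_add_coe]; exact (by simp)

lemma auxEReal_le_iff {x : EReal} (hx : x ≠ ⊥) (c : ℝ) :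
    (c : EReal) ≤ x ↔ 0 ≤ x + ((-c : ℝ) : EReal) := by
  induction x with
  | bot => exact absurd rfl hx
  | coe y =>
      rw [← EReal.coe_add, EReal.coe_le_coe_iff, ← EReal.coe_zero, EReal.coe_le_coe_iff]
      constructor <;> intro <;> linarith
  | top => simp [EReal.top_add_coe]

lemma aux_sublevel_closed {α : Type*} [TopologicalSpace α] {K : Set α} (hK : IsClosed K)
    {g : α → EReal} (hg : LowerSemicontinuousOn g K) (c : EReal) :
    IsClosed {x | x ∈ K ∧ g x ≤ c} := by
  rw [← isOpen_compl_iff, isOpen_iff_mem_nhds]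
  intro x hx
  by_cases hxK : x ∈ K
  · have hcx : c < g x := by
      by_contra hcon
      exact hx ⟨hxK, le_of_not_gt hcon⟩
    have := hg x hxK c hcx
    rw [eventually_nhdsWithin_iff] at this
    exact this.mono fun y hy hmem => (hy hmem.1).not_ge hmem.2
  · exact Filter.mem_of_superset (hK.isOpen_compl.mem_nhds hxK) fun y hy hmem => hy hmem.1

lemma aux_lsc_min {α : Type*} [TopologicalSpace α] {K : Set α} (hKc : IsCompact K)
    (hKcl : IsClosed K) (hne : K.Nonempty) {g : α → EReal}
    (hg : LowerSemicontinuousOn g K) : ∃ x ∈ K, ∀ y ∈ K, g x ≤ g y := by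
  set m := sInf (g '' K) with hm
  by_cases htop : m = ⊤
  · refine ⟨hne.choose, hne.choose_spec, fun y hy => ?_⟩
    have : g y = ⊤ := by
      have := sInf_eq_top.1 htop
      exact this _ (mem_image_of_mem g hy)
    rw [this]; exact le_top
  · have : ∃ x, x ∈ ⋂ c : {c : EReal // m < c}, {x | x ∈ K ∧ g x ≤ c.1} := by
      have hnonemp : Nonempty {c : EReal // m < c} := ⟨⟨⊤, lt_top_iff_ne_top.2 htop⟩⟩
      apply IsCompact.nonempty_iInter_of_directed_nonempty_isCompact_isClosed
        (fun c : {c : EReal // m < c} => {x | x ∈ K ∧ g x ≤ c.1})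
      · intro c d
        refine ⟨⟨min c.1 d.1, lt_min c.2 d.2⟩, fun x hx => ⟨hx.1, le_trans hx.2 ?_⟩,
          fun x hx => ⟨hx.1, le_trans hx.2 ?_⟩⟩
        · exact min_le_left _ _
        · exact min_le_right _ _
      · intro c
        obtain ⟨z, hz, hzc⟩ := sInf_lt_iff.1 c.2
        obtain ⟨x, hxK, rfl⟩ := hz
        exact ⟨x, hxK, hzc.le⟩
      · intro c
        exact hKc.of_isClosed_subset (aux_sublevel_closed hKcl hg c.1) fun x hx => hx.1
      · intro c
        exact aux_sublevel_closed hKcl hg c.1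
    obtain ⟨x, hx⟩ := this
    simp only [mem_iInter, mem_setOf_eq] at hx
    have hxK : x ∈ K := (hx ⟨⊤, lt_top_iff_ne_top.2 htop⟩).1
    refine ⟨x, hxK, fun y hy => ?_⟩
    have hxm : g x ≤ m := by
      apply le_of_forall_gt_imp_ge_of_dense
      intro c hc
      exact (hx ⟨c, hc⟩).2
    exact hxm.trans (sInf_le (mem_image_of_mem g hy))

lemma aux_epi_closed {α : Type*} [TopologicalSpace α] {K : Set α} (hK : IsClosed K)
    {g : α → EReal} (hg : LowerSemicontinuousOn g K) :
    IsClosed {p : α × ℝ | p.1 ∈ K ∧ g p.1 ≤ (p.2 : EReal)} := by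
  rw [← isOpen_compl_iff, isOpen_iff_mem_nhds]
  rintro ⟨x, t⟩ hx
  by_cases hxK : x ∈ K
  · have hcx : (t : EReal) < g x := by
      by_contra hcon
      exact hx ⟨hxK, le_of_not_gt hcon⟩
    obtain ⟨c, htc, hcg⟩ := EReal.exists_between_coe_real hcx
    have hev := hg x hxK _ hcg
    rw [eventually_nhdsWithin_iff] at hev
    have h1 : {q : α × ℝ | (q.1 ∈ K → (c : EReal) < g q.1) ∧ q.2 < c} ∈ 𝓝 (x, t) := by
      rw [nhds_prod_eq]
      exact Filter.prod_mem_prod hev (Iio_mem_nhds (EReal.coe_lt_coe_iff.1 htc))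
    refine Filter.mem_of_superset h1 ?_
    rintro ⟨y, s⟩ ⟨hy1, hy2⟩ ⟨hyK, hyle⟩
    exact absurd (hyle.trans_lt (EReal.coe_lt_coe_iff.2 hy2)) (not_lt.2 (hy1 hyK).le)
  · have : (Kᶜ ×ˢ (univ : Set ℝ)) ∈ 𝓝 (x, t) := by
      rw [nhds_prod_eq]
      exact Filter.prod_mem_prod (hK.isOpen_compl.mem_nhds hxK) univ_mem
    exact Filter.mem_of_superset this fun q hq hmem => hq.1 hmem.1

end Helpers


lemma aux_bauer {E : Type*} [AddCommGroup E] [Module ℝ E] [TopologicalSpace E] [T2Space E]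
    [IsTopologicalAddGroup E] [ContinuousSMul ℝ E] [LocallyConvexSpace ℝ E]
    {K : Set E} (hKc : IsCompact K)
    {g : E → EReal} (hg : LowerSemicontinuousOn g K) (hgb : ∀ x ∈ K, g x ≠ ⊥)
    (hgaff : ∀ x ∈ K, ∀ y ∈ K, ∀ t : ℝ, 0 < t → t < 1 →
      g ((1 - t) • x + t • y) = ((1 - t : ℝ) : EReal) * g x + ((t : ℝ) : EReal) * g y)
    (hext : ∀ ψ ∈ Set.extremePoints ℝ K, 0 ≤ g ψ) :
    ∀ x ∈ K, 0 ≤ g x := by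
  intro x₀ hx₀
  have hKcl : IsClosed K := hKc.isClosed
  obtain ⟨z, hz, hzmin⟩ := aux_lsc_min hKc hKcl ⟨x₀, hx₀⟩ hg
  by_cases hm : g z = ⊤
  · have : g x₀ = ⊤ := top_le_iff.1 (hm ▸ hzmin x₀ hx₀)
    rw [this]; exact le_top
  · set m : EReal := g z with hmdef
    set F : Set E := {x | x ∈ K ∧ g x ≤ m} with hF
    have hFcl : IsClosed F := aux_sublevel_closed hKcl hg m
    have hFc : IsCompact F := hKc.of_isClosed_subset hFcl fun x hx => hx.1
    have hFne : F.Nonempty := ⟨z, hz, le_refl _⟩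
    have hmbot : m ≠ ⊥ := hgb z hz
    have hmreal : m = ((m.toReal : ℝ) : EReal) := (EReal.coe_toReal hm hmbot).symm
    have hFext : IsExtreme ℝ K F := by
      refine ⟨fun x hx => hx.1, ?_⟩
      intro x₁ hx₁ x₂ hx₂ x hxF hxseg
      obtain ⟨a, b, ha, hb, hab, hsum⟩ := hxseg
      have ha1 : a = 1 - b := by linarith
      have hb1 : b < 1 := by linarith
      have hgx : g x = ((1 - b : ℝ) : EReal) * g x₁ + ((b : ℝ) : EReal) * g x₂ := by
        rw [← hgaff x₁ hx₁ x₂ hx₂ b hb hb1]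
        rw [← ha1, hsum]
      -- g x₁ and g x₂ are not ⊤
      have hne1 : g x₁ ≠ ⊤ := by
        intro htop
        have h2 : ((b : ℝ) : EReal) * g x₂ ≠ ⊥ := auxEReal_mul_ne_bot hb (hgb x₂ hx₂)
        have : g x = ⊤ := by
          rw [hgx, htop, EReal.mul_top_of_pos (by exact_mod_cast sub_pos.2 hb1),
            EReal.top_add_of_ne_bot h2]
        exact hm (top_le_iff.1 (this ▸ hxF.2))
      have hne2 : g x₂ ≠ ⊤ := by
        intro htop
        have h2 : ((1 - b : ℝ) : EReal) * g x₁ ≠ ⊥ :=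
          auxEReal_mul_ne_bot (sub_pos.2 hb1) (hgb x₁ hx₁)
        have : g x = ⊤ := by
          rw [hgx, htop, EReal.mul_top_of_pos (by exact_mod_cast hb), add_comm,
            EReal.top_add_of_ne_bot h2]
        exact hm (top_le_iff.1 (this ▸ hxF.2))
      set r₁ : ℝ := (g x₁).toReal with hr₁
      set r₂ : ℝ := (g x₂).toReal with hr₂
      have hgx₁ : g x₁ = (r₁ : EReal) := (EReal.coe_toReal hne1 (hgb x₁ hx₁)).symm
      have hgx₂ : g x₂ = (r₂ : EReal) := (EReal.coe_toReal hne2 (hgb x₂ hx₂)).symm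
      have hr₁m : (m.toReal : ℝ) ≤ r₁ := by
        have := hzmin x₁ hx₁
        rw [hgx₁, hmreal] at this
        exact EReal.coe_le_coe_iff.1 this
      have hr₂m : (m.toReal : ℝ) ≤ r₂ := by
        have := hzmin x₂ hx₂
        rw [hgx₂, hmreal] at this
        exact EReal.coe_le_coe_iff.1 this
      have hxm : (1 - b) * r₁ + b * r₂ ≤ m.toReal := by
        have := hxF.2
        rw [hgx, hgx₁, hgx₂, hmreal, ← EReal.coe_mul, ← EReal.coe_mul, ← EReal.coe_add] at this
        exact EReal.coe_le_coe_iff.1 this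
      · refine ⟨hx₁, ?_⟩
        rw [hgx₁, hmreal, EReal.coe_le_coe_iff]
        nlinarith
    obtain ⟨ψ, hψ⟩ := hFc.extremePoints_nonempty hFne
    have hψK : ψ ∈ Set.extremePoints ℝ K := hFext.extremePoints_subset_extremePoints hψ
    have h0 : (0 : EReal) ≤ g ψ := hext ψ hψK
    have hψF : ψ ∈ F := hψ.1
    exact le_trans (h0.trans hψF.2) (hzmin x₀ hx₀)


lemma aux_dominated {E : Type*} [AddCommGroup E] [Module ℝ E] [TopologicalSpace E] [T2Space E]
    [IsTopologicalAddGroup E] [ContinuousSMul ℝ E] [LocallyConvexSpace ℝ E]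
    {K : Set E} (hKc : IsCompact K)
    {h' : E → EReal} (hbot' : ∀ ρ ∈ K, h' ρ ≠ ⊥)
    (haff' : ∀ ρ ∈ K, ∀ σ ∈ K, ∀ t : ℝ, 0 ≤ t → t ≤ 1 →
      h' ((1 - t) • ρ + t • σ) = ((1 - t : ℝ) : EReal) * h' ρ + ((t : ℝ) : EReal) * h' σ)
    (hlsc' : LowerSemicontinuousOn h' K)
    (L : E →L[ℝ] ℝ) (α : ℝ)
    (hext : ∀ ψ ∈ Set.extremePoints ℝ K, ((α + L ψ : ℝ) : EReal) ≤ h' ψ) :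
    ∀ σ ∈ K, ((α + L σ : ℝ) : EReal) ≤ h' σ := by
  set A : E → ℝ := fun σ => α + L σ with hA
  set g : E → EReal := fun σ => h' σ + ((-(A σ) : ℝ) : EReal) with hg
  have hAcont : Continuous A := continuous_const.add L.continuous
  have hAaff : ∀ (x y : E) (t : ℝ), A ((1 - t) • x + t • y) = (1 - t) * A x + t * A y := by
    intro x y t
    simp only [hA, map_add, map_smul, smul_eq_mul]
    ring
  -- lsc of g on K
  have hglsc : LowerSemicontinuousOn g K := by
    intro σ hσ y hy
    obtain ⟨c, hyc, hcg⟩ := EReal.exists_between_coe_real hy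
    obtain ⟨c', hyc', hc'c⟩ := EReal.exists_between_coe_real hyc
    have hc'c' : c' < c := EReal.coe_lt_coe_iff.1 hc'c
    have hch : ((c + A σ : ℝ) : EReal) < h' σ := by
      by_contra hcon
      have h2 : h' σ + ((-(A σ) : ℝ) : EReal) ≤ ((c + A σ : ℝ) : EReal) + ((-(A σ) : ℝ) : EReal) :=
        add_le_add_left (le_of_not_gt hcon) _
      rw [← EReal.coe_add] at h2
      have : (c + A σ + -A σ : ℝ) = c := by ring
      rw [this] at h2
      exact (not_lt.2 h2) hcg
    have hev1 := hlsc' σ hσ _ hch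
    have hev2 : ∀ᶠ τ in 𝓝[K] σ, A σ - A τ > -(c - c') := by
      have : ∀ᶠ τ in 𝓝 σ, A σ - A τ > -(c - c') := by
        have hc : Continuous fun τ => A σ - A τ := continuous_const.sub hAcont
        have : (fun τ => A σ - A τ) ⁻¹' (Ioi (-(c - c'))) ∈ 𝓝 σ := by
          apply hc.continuousAt.preimage_mem_nhds
          apply Ioi_mem_nhds
          simp only [sub_self]
          linarith
        exact this
      exact this.filter_mono nhdsWithin_le_nhds
    filter_upwards [hev1, hev2] with τ h1 h2
    have hge : ((c + A σ : ℝ) : EReal) + ((-(A τ) : ℝ) : EReal) ≤ g τ :=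
      add_le_add_left h1.le _
    rw [← EReal.coe_add] at hge
    have hlt : (c' : ℝ) < c + A σ + -A τ := by linarith
    calc y < (c' : EReal) := hyc'
    _ < ((c + A σ + -A τ : ℝ) : EReal) := EReal.coe_lt_coe_iff.2 hlt
    _ ≤ g τ := hge
  have hgbot : ∀ x ∈ K, g x ≠ ⊥ := fun x hx => auxEReal_add_coe_ne_bot (hbot' x hx) _
  have hgaff : ∀ x ∈ K, ∀ y ∈ K, ∀ t : ℝ, 0 < t → t < 1 →
      g ((1 - t) • x + t • y) = ((1 - t : ℝ) : EReal) * g x + ((t : ℝ) : EReal) * g y := by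
    intro x hx y hy t ht ht1
    have hkey := haff' x hx y hy t ht.le ht1.le
    have hAkey := hAaff x y t
    by_cases hx' : h' x = ⊤
    · have hgx : g x = ⊤ := by rw [hg]; simp only; rw [hx', EReal.top_add_coe]
      have hcomb : h' ((1 - t) • x + t • y) = ⊤ := by
        rw [hkey, hx', EReal.mul_top_of_pos (by exact_mod_cast sub_pos.2 ht1),
          EReal.top_add_of_ne_bot (auxEReal_mul_ne_bot ht (hbot' y hy))]
      have hrhs : ((1 - t : ℝ) : EReal) * g x + ((t : ℝ) : EReal) * g y = ⊤ := by
        rw [hgx, EReal.mul_top_of_pos (by exact_mod_cast sub_pos.2 ht1),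
          EReal.top_add_of_ne_bot (auxEReal_mul_ne_bot ht (hgbot y hy))]
      show h' _ + _ = _
      rw [hcomb, EReal.top_add_coe, hrhs]
    · by_cases hy' : h' y = ⊤
      · have hgy : g y = ⊤ := by rw [hg]; simp only; rw [hy', EReal.top_add_coe]
        have hcomb : h' ((1 - t) • x + t • y) = ⊤ := by
          rw [hkey, hy', EReal.mul_top_of_pos (by exact_mod_cast ht), add_comm,
            EReal.top_add_of_ne_bot (auxEReal_mul_ne_bot (sub_pos.2 ht1) (hbot' x hx))]
        have hrhs : ((1 - t : ℝ) : EReal) * g x + ((t : ℝ) : EReal) * g y = ⊤ := by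
          rw [hgy, EReal.mul_top_of_pos (by exact_mod_cast ht), add_comm,
            EReal.top_add_of_ne_bot (auxEReal_mul_ne_bot (sub_pos.2 ht1) (hgbot x hx))]
        show h' _ + _ = _
        rw [hcomb, EReal.top_add_coe, hrhs]
      · -- both real
        have hxr : h' x = (((h' x).toReal : ℝ) : EReal) := (EReal.coe_toReal hx' (hbot' x hx)).symm
        have hyr : h' y = (((h' y).toReal : ℝ) : EReal) := (EReal.coe_toReal hy' (hbot' y hy)).symm
        set rx := (h' x).toReal
        set ry := (h' y).toReal
        show h' _ + _ = ((1 - t : ℝ) : EReal) * g x + ((t : ℝ) : EReal) * g y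
        have hgx : g x = ((rx + -(A x) : ℝ) : EReal) := by
          rw [hg]; simp only; rw [hxr, ← EReal.coe_add]
        have hgy : g y = ((ry + -(A y) : ℝ) : EReal) := by
          rw [hg]; simp only; rw [hyr, ← EReal.coe_add]
        rw [hkey, hxr, hyr, hgx, hgy, hAkey, ← EReal.coe_mul, ← EReal.coe_mul,
          ← EReal.coe_add, ← EReal.coe_mul, ← EReal.coe_mul, ← EReal.coe_add, ← EReal.coe_add]
        rw [EReal.coe_eq_coe_iff]
        ring
  have hgext : ∀ ψ ∈ Set.extremePoints ℝ K, 0 ≤ g ψ := by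
    intro ψ hψ
    exact (auxEReal_le_iff (hbot' ψ hψ.1) (A ψ)).1 (hext ψ hψ)
  intro σ hσ
  exact (auxEReal_le_iff (hbot' σ hσ) (A σ)).2 (aux_bauer hKc hglsc hgbot hgaff hgext σ hσ)


section Minorant

variable {E : Type*} [AddCommGroup E] [Module ℝ E] [TopologicalSpace E] [T2Space E]
    [IsTopologicalAddGroup E] [ContinuousSMul ℝ E] [LocallyConvexSpace ℝ E]
    {K : Set E} {h : E → EReal}

lemma aux_epi_convex (hKconv : Convex ℝ K) (hbot : ∀ ρ ∈ K, h ρ ≠ ⊥)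
    (haff : ∀ ρ ∈ K, ∀ σ ∈ K, ∀ t : ℝ, 0 ≤ t → t ≤ 1 →
      h ((1 - t) • ρ + t • σ) = ((1 - t : ℝ) : EReal) * h ρ + ((t : ℝ) : EReal) * h σ) :
    Convex ℝ {p : E × ℝ | p.1 ∈ K ∧ h p.1 ≤ (p.2 : EReal)} := by
  rintro ⟨x, s⟩ ⟨hxK, hxs⟩ ⟨y, t⟩ ⟨hyK, hyt⟩ a b ha hb hab
  have ha1 : a = 1 - b := by linarith
  have hb1 : b ≤ 1 := by linarith
  constructor
  · exact hKconv hxK hyK ha hb hab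
  · show h (a • x + b • y) ≤ ((a • s + b • t : ℝ) : EReal)
    have hxtop : h x ≠ ⊤ := fun htop => by
      rw [htop] at hxs; exact (not_le.2 (EReal.coe_lt_top s)) hxs
    have hytop : h y ≠ ⊤ := fun htop => by
      rw [htop] at hyt; exact (not_le.2 (EReal.coe_lt_top t)) hyt
    have hxr : h x = (((h x).toReal : ℝ) : EReal) := (EReal.coe_toReal hxtop (hbot x hxK)).symm
    have hyr : h y = (((h y).toReal : ℝ) : EReal) := (EReal.coe_toReal hytop (hbot y hyK)).symm
    have hxs' : (h x).toReal ≤ s := EReal.coe_le_coe_iff.1 (hxr ▸ hxs)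
    have hyt' : (h y).toReal ≤ t := EReal.coe_le_coe_iff.1 (hyr ▸ hyt)
    have hcomb := haff x hxK y hyK b hb hb1
    rw [← ha1] at hcomb
    rw [hcomb, hxr, hyr, ← EReal.coe_mul, ← EReal.coe_mul, ← EReal.coe_add,
      EReal.coe_le_coe_iff, smul_eq_mul, smul_eq_mul, ha1]
    nlinarith [mul_le_mul_of_nonneg_left hxs' ha, mul_le_mul_of_nonneg_left hyt' hb]

lemma aux_core (hKcl : IsClosed K) (hKconv : Convex ℝ K) (hbot : ∀ ρ ∈ K, h ρ ≠ ⊥)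
    (haff : ∀ ρ ∈ K, ∀ σ ∈ K, ∀ t : ℝ, 0 ≤ t → t ≤ 1 →
      h ((1 - t) • ρ + t • σ) = ((1 - t : ℝ) : EReal) * h ρ + ((t : ℝ) : EReal) * h σ)
    (hlsc : LowerSemicontinuousOn h K)
    {σ₁ : E} (hσ₁K : σ₁ ∈ K) (hσ₁ : h σ₁ ≠ ⊤)
    {ρ : E} {r : ℝ} (hρr : ¬(ρ ∈ K ∧ h ρ ≤ (r : EReal))) :
    ∃ (L₀ : E →L[ℝ] ℝ) (c u : ℝ), 0 ≤ c ∧ L₀ ρ + r * c < u ∧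
      ∀ σ ∈ K, ∀ t : ℝ, h σ ≤ (t : EReal) → u < L₀ σ + t * c := by
  set Epi : Set (E × ℝ) := {p | p.1 ∈ K ∧ h p.1 ≤ (p.2 : EReal)} with hEpi
  have hcl : IsClosed Epi := aux_epi_closed hKcl hlsc
  have hconv : Convex ℝ Epi := aux_epi_convex hKconv hbot haff
  have hnot : (ρ, r) ∉ Epi := hρr
  obtain ⟨f, u, hfu, hfE⟩ := geometric_hahn_banach_point_closed hconv hcl hnot
  set L₀ : E →L[ℝ] ℝ := f.comp (ContinuousLinearMap.inl ℝ E ℝ) with hL₀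
  set c : ℝ := f (0, 1) with hc
  have hdec : ∀ (σ : E) (t : ℝ), f (σ, t) = L₀ σ + t * c := by
    intro σ t
    have heq : (σ, t) = (σ, (0 : ℝ)) + t • ((0 : E), (1 : ℝ)) := by
      simp [Prod.ext_iff]
    rw [heq, map_add, map_smul, smul_eq_mul]
    rfl
  have hmem : ∀ σ ∈ K, ∀ t : ℝ, h σ ≤ (t : EReal) → u < L₀ σ + t * c := by
    intro σ hσ t ht
    have := hfE (σ, t) ⟨hσ, ht⟩
    rwa [hdec] at this
  have hσ₁r : h σ₁ = (((h σ₁).toReal : ℝ) : EReal) := (EReal.coe_toReal hσ₁ (hbot σ₁ hσ₁K)).symm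
  set s₁ := (h σ₁).toReal with hs₁
  have hmem₁ : ∀ t : ℝ, s₁ ≤ t → u < L₀ σ₁ + t * c := fun t ht =>
    hmem σ₁ hσ₁K t (by rw [hσ₁r]; exact_mod_cast ht)
  have hc0 : 0 ≤ c := by
    by_contra hcneg
    push_neg at hcneg
    set t₀ : ℝ := max s₁ ((u - L₀ σ₁) / c + 1) with ht₀
    have h1 := hmem₁ t₀ (le_max_left _ _)
    have h2 : (u - L₀ σ₁) / c + 1 ≤ t₀ := le_max_right _ _
    have h3 : t₀ * c ≤ ((u - L₀ σ₁) / c + 1) * c := mul_le_mul_of_nonpos_right h2 hcneg.le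
    have hcne : c ≠ 0 := ne_of_lt hcneg
    have h4 : ((u - L₀ σ₁) / c + 1) * c = (u - L₀ σ₁) + c := by
      rw [add_mul, div_mul_cancel₀ _ hcne, one_mul]
    linarith
  refine ⟨L₀, c, u, hc0, ?_, hmem⟩
  have := hfu
  rwa [hdec] at this

lemma aux_build {L₀ : E →L[ℝ] ℝ} {c u : ℝ} (hbot : ∀ ρ ∈ K, h ρ ≠ ⊥) (hcpos : 0 < c)
    (hmem : ∀ σ ∈ K, ∀ t : ℝ, h σ ≤ (t : EReal) → u < L₀ σ + t * c) :
    ∃ (L : E →L[ℝ] ℝ) (α : ℝ), (∀ σ ∈ K, ((α + L σ : ℝ) : EReal) ≤ h σ) ∧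
      ∀ τ : E, α + L τ = (u - L₀ τ) / c := by
  refine ⟨(-c⁻¹) • L₀, u / c, ?_, ?_⟩
  · intro σ hσ
    by_cases hσtop : h σ = ⊤
    · rw [hσtop]; exact le_top
    · have hσr : h σ = (((h σ).toReal : ℝ) : EReal) := (EReal.coe_toReal hσtop (hbot σ hσ)).symm
      have hu := hmem σ hσ (h σ).toReal hσr.le
      rw [hσr, EReal.coe_le_coe_iff]
      have happ : ((-c⁻¹) • L₀) σ = -c⁻¹ * L₀ σ := rfl
      rw [happ]
      have hkey : u - L₀ σ < (h σ).toReal * c := by linarith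
      have heq : u / c + -c⁻¹ * L₀ σ = (u - L₀ σ) / c := by
        field_simp
        ring
      rw [heq, div_le_iff₀ hcpos]
      linarith
  · intro τ
    have happ : ((-c⁻¹) • L₀) τ = -c⁻¹ * L₀ τ := rfl
    rw [happ]
    field_simp
    ring

end Minorant


section Minorant

variable {E : Type*} [AddCommGroup E] [Module ℝ E] [TopologicalSpace E] [T2Space E]
    [IsTopologicalAddGroup E] [ContinuousSMul ℝ E] [LocallyConvexSpace ℝ E]
    {K : Set E} {h : E → EReal}

lemma aux_global (hKcl : IsClosed K) (hKconv : Convex ℝ K) (hbot : ∀ ρ ∈ K, h ρ ≠ ⊥)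
    (haff : ∀ ρ ∈ K, ∀ σ ∈ K, ∀ t : ℝ, 0 ≤ t → t ≤ 1 →
      h ((1 - t) • ρ + t • σ) = ((1 - t : ℝ) : EReal) * h ρ + ((t : ℝ) : EReal) * h σ)
    (hlsc : LowerSemicontinuousOn h K)
    {σ₁ : E} (hσ₁K : σ₁ ∈ K) (hσ₁ : h σ₁ ≠ ⊤) :
    ∃ (L : E →L[ℝ] ℝ) (α : ℝ), ∀ σ ∈ K, ((α + L σ : ℝ) : EReal) ≤ h σ := by
  have hσ₁r : h σ₁ = (((h σ₁).toReal : ℝ) : EReal) := (EReal.coe_toReal hσ₁ (hbot σ₁ hσ₁K)).symm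
  set s₁ := (h σ₁).toReal with hs₁
  have hnot : ¬(σ₁ ∈ K ∧ h σ₁ ≤ ((s₁ - 1 : ℝ) : EReal)) := by
    rintro ⟨-, hle⟩
    rw [hσ₁r, EReal.coe_le_coe_iff] at hle
    linarith
  obtain ⟨L₀, c, u, hc0, hlt, hmem⟩ := aux_core hKcl hKconv hbot haff hlsc hσ₁K hσ₁ hnot
  have hcpos : 0 < c := by
    rcases hc0.lt_or_eq with hc | hc
    · exact hc
    · exfalso
      have h1 := hmem σ₁ hσ₁K s₁ hσ₁r.le
      rw [← hc] at h1 hlt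
      simp only [mul_zero, add_zero] at h1 hlt
      linarith
  obtain ⟨L, α, hle, -⟩ := aux_build hbot hcpos hmem
  exact ⟨L, α, hle⟩

lemma aux_minorant (hKcl : IsClosed K) (hKconv : Convex ℝ K) (hbot : ∀ ρ ∈ K, h ρ ≠ ⊥)
    (haff : ∀ ρ ∈ K, ∀ σ ∈ K, ∀ t : ℝ, 0 ≤ t → t ≤ 1 →
      h ((1 - t) • ρ + t • σ) = ((1 - t : ℝ) : EReal) * h ρ + ((t : ℝ) : EReal) * h σ)
    (hlsc : LowerSemicontinuousOn h K)
    {ρ : E} (hρ : ρ ∈ K) {r : ℝ} (hr : (r : EReal) < h ρ) :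
    ∃ (L : E →L[ℝ] ℝ) (α : ℝ), (∀ σ ∈ K, ((α + L σ : ℝ) : EReal) ≤ h σ) ∧ r < α + L ρ := by
  by_cases hall : ∀ σ ∈ K, h σ = ⊤
  · refine ⟨0, r + 1, fun σ hσ => ?_, by simp⟩
    rw [hall σ hσ]; exact le_top
  push_neg at hall
  obtain ⟨σ₁, hσ₁K, hσ₁⟩ := hall
  have hnot : ¬(ρ ∈ K ∧ h ρ ≤ (r : EReal)) := fun hc => (not_lt.2 hc.2) hr
  obtain ⟨L₀, c, u, hc0, hlt, hmem⟩ := aux_core hKcl hKconv hbot haff hlsc hσ₁K hσ₁ hnot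
  rcases hc0.lt_or_eq with hcpos | hczero
  · obtain ⟨L, α, hle, hform⟩ := aux_build hbot hcpos hmem
    refine ⟨L, α, hle, ?_⟩
    rw [hform, lt_div_iff₀ hcpos]
    linarith
  · -- c = 0
    obtain ⟨L₁, α₁, hle₁⟩ := aux_global hKcl hKconv hbot haff hlsc hσ₁K hσ₁
    rw [← hczero] at hlt hmem
    simp only [mul_zero, add_zero] at hlt hmem
    -- hlt : L₀ ρ < u ; hmem : ∀ σ ∈ K, ∀ t, h σ ≤ t → u < L₀ σ
    set δ : ℝ := u - L₀ ρ with hδ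
    have hδpos : 0 < δ := by simp only [hδ]; linarith
    set M : ℝ := max 0 ((r + 1 - (α₁ + L₁ ρ)) / δ) with hM
    have hM0 : 0 ≤ M := le_max_left _ _
    refine ⟨L₁ - M • L₀, α₁ + M * u, ?_, ?_⟩
    · intro σ hσ
      by_cases hσtop : h σ = ⊤
      · rw [hσtop]; exact le_top
      · have hσr : h σ = (((h σ).toReal : ℝ) : EReal) := (EReal.coe_toReal hσtop (hbot σ hσ)).symm
        have huL := hmem σ hσ (h σ).toReal hσr.le
        have happ : (L₁ - M • L₀) σ = L₁ σ - M * L₀ σ := rfl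
        rw [happ]
        have hkey : α₁ + M * u + (L₁ σ - M * L₀ σ) ≤ α₁ + L₁ σ := by nlinarith
        calc ((α₁ + M * u + (L₁ σ - M * L₀ σ) : ℝ) : EReal)
            ≤ ((α₁ + L₁ σ : ℝ) : EReal) := EReal.coe_le_coe_iff.2 hkey
        _ ≤ h σ := hle₁ σ hσ
    · have happ : (L₁ - M • L₀) ρ = L₁ ρ - M * L₀ ρ := rfl
      rw [happ]
      have hMδ : (r + 1 - (α₁ + L₁ ρ)) / δ ≤ M := le_max_right _ _
      have h2 : r + 1 - (α₁ + L₁ ρ) ≤ M * δ := by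
        rw [div_le_iff₀ hδpos] at hMδ
        linarith
      have h3 : M * δ = M * u - M * L₀ ρ := by rw [hδ]; ring
      linarith

end Minorant

section SS

noncomputable instance (priority := 100) auxWeakDualLCS {V : Type*} [NormedAddCommGroup V]
    [NormedSpace ℝ V] : LocallyConvexSpace ℝ (WeakDual ℝ V) :=
  WeakBilin.locallyConvexSpace

variable {V : Type*} [NormedAddCommGroup V] [NormedSpace ℝ V] {P : Set V} {v : V}

lemma aux_ss_convex : Convex ℝ (stateSpace P v) := by
  intro ρ hρ σ hσ a b ha hb hab
  constructor
  · intro x hx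
    have happ : (a • ρ + b • σ) x = a * ρ x + b * σ x := rfl
    rw [happ]
    have := hρ.1 x hx
    have := hσ.1 x hx
    positivity
  · have happ : (a • ρ + b • σ) v = a * ρ v + b * σ v := rfl
    rw [happ, hρ.2, hσ.2]
    linarith

lemma aux_ss_closed : IsClosed (stateSpace P v) := by
  have heq : stateSpace P v =
      (⋂ x ∈ P, {ρ : WeakDual ℝ V | 0 ≤ ρ x}) ∩ {ρ : WeakDual ℝ V | ρ v = 1} := by
    ext ρ
    simp [stateSpace, mem_iInter]
  rw [heq]
  refine IsClosed.inter (isClosed_biInter fun x _ => ?_) ?_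
  · exact isClosed_le continuous_const (WeakDual.eval_continuous x)
  · exact isClosed_eq (WeakDual.eval_continuous v) continuous_const

lemma aux_ss_bound (hV : IsOrderUnitSpace V P v) {ρ : WeakDual ℝ V}
    (hρ : ρ ∈ stateSpace P v) (x : V) : |ρ x| ≤ ‖x‖ := by
  rw [hV.norm_eq x]
  have hne : {r : ℝ | 0 ≤ r ∧ x + r • v ∈ P ∧ r • v - x ∈ P}.Nonempty := by
    obtain ⟨r, hr, hrP⟩ := hV.unit_order x
    obtain ⟨r', hr', hr'P⟩ := hV.unit_order (-x)
    refine ⟨max r r', le_trans hr.le (le_max_left _ _), ?_, ?_⟩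
    · have h1 : x + max r r' • v = (r' • v - -x) + (max r r' - r') • v := by
        rw [sub_smul]; abel
      rw [h1]
      exact hV.add_mem _ hr'P _ (hV.smul_mem _ (by simp [le_max_right]) v hV.unit_mem)
    · have h1 : max r r' • v - x = (r • v - x) + (max r r' - r) • v := by
        rw [sub_smul]; abel
      rw [h1]
      exact hV.add_mem _ hrP _ (hV.smul_mem _ (by simp [le_max_left]) v hV.unit_mem)
  apply le_csInf hne
  rintro b ⟨hb0, hb1, hb2⟩
  have e1 : 0 ≤ ρ x + b := by
    have := hρ.1 _ hb1
    rwa [map_add, map_smul, smul_eq_mul, hρ.2, mul_one] at this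
  have e2 : 0 ≤ b - ρ x := by
    have := hρ.1 _ hb2
    rwa [map_sub, map_smul, smul_eq_mul, hρ.2, mul_one] at this
  rw [abs_le]
  constructor <;> linarith

lemma aux_ss_compact (hV : IsOrderUnitSpace V P v) : IsCompact (stateSpace P v) := by
  have hsub : stateSpace P v ⊆ WeakDual.polar ℝ (Metric.ball (0 : V) 1) := by
    intro ρ hρ
    rw [WeakDual.polar_def]
    intro x hx
    have h1 : ‖x‖ < 1 := by simpa [Metric.mem_ball] using hx
    have h2 := aux_ss_bound hV hρ x
    rw [Real.norm_eq_abs]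
    linarith
  exact (WeakDual.isCompact_polar ℝ (Metric.ball_mem_nhds (0 : V) one_pos)).of_isClosed_subset
    aux_ss_closed hsub

end SS

/-- Let `K` be the state space of a nonzero complete order unit
space, and let `h, h' : K → (−∞, ∞]` be affine lower semicontinuous functions. If
`h ≤ h'` on the extreme points of `K`, then `h ≤ h'` on all of `K`. -/
theorem le_of_le_on_extremePoints
    {V : Type*} [NormedAddCommGroup V] [NormedSpace ℝ V] [CompleteSpace V] [Nontrivial V]
    (P : Set V) (v : V) (hV : IsOrderUnitSpace V P v)
    (h h' : WeakDual ℝ V → EReal)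
    (hbot : ∀ ρ ∈ stateSpace P v, h ρ ≠ ⊥) (hbot' : ∀ ρ ∈ stateSpace P v, h' ρ ≠ ⊥)
    (haff : AffineOnKE (stateSpace P v) h) (haff' : AffineOnKE (stateSpace P v) h')
    (hlsc : LowerSemicontinuousOn h (stateSpace P v))
    (hlsc' : LowerSemicontinuousOn h' (stateSpace P v))
    (hle : ∀ ψ ∈ Set.extremePoints ℝ (stateSpace P v), h ψ ≤ h' ψ) :
    ∀ ρ ∈ stateSpace P v, h ρ ≤ h' ρ := by
  intro ρ hρ
  have hKconv : Convex ℝ (stateSpace P v) := aux_ss_convex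
  have hKcl : IsClosed (stateSpace P v) := aux_ss_closed
  have hKc : IsCompact (stateSpace P v) := aux_ss_compact hV
  by_contra hcon
  push_neg at hcon
  obtain ⟨r, hr1, hr2⟩ := EReal.exists_between_coe_real hcon
  obtain ⟨L, α, hmin, hgt⟩ := aux_minorant hKcl hKconv hbot haff hlsc hρ hr2
  have hext : ∀ ψ ∈ Set.extremePoints ℝ (stateSpace P v), ((α + L ψ : ℝ) : EReal) ≤ h' ψ :=
    fun ψ hψ => (hmin ψ hψ.1).trans (hle ψ hψ)
  have hdom := aux_dominated hKc hbot' haff' hlsc' L α hext ρ hρ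
  have hlt : (r : EReal) < ((α + L ρ : ℝ) : EReal) := EReal.coe_lt_coe_iff.2 hgt
  exact absurd (hlt.trans_le hdom) (not_lt.2 hr1.le)
end
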